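/- arXiv:2408.07560 — 10 statements merged into one kernel-verified Lean document; each statement's English description precedes it below -/
import Mathlib

section
/- Under the core RCT assumptions (exchangeability, positivity, consistency) together with no effect on exposure, exposure necessity and no cross-infectivity, and provided P(E^a = j) > 0 for a ∈ {0,1} and P(Y = j | A = 0) > 0, for each j ∈ {1,2} the relative causal effect conditional on exposure is identified: P(Y^1 = j | E^1 = j) / P(Y^0 = j | E^0 = j) = P(Y = j | A = 1) / P(Y = j | A = 0). -/
open MeasureTheory

/-- `prR P B` is the probability `P(B)` as a real number. -/
noncomputable def prR {Ω : Type*} [MeasurableSpace Ω] (P : Measure Ω) (B : Set Ω) : ℝ :=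
  (P B).toReal

/-- `cprR P B C` is the conditional probability `P(B | C) = P(B ∩ C) / P(C)`. -/
noncomputable def cprR {Ω : Type*} [MeasurableSpace Ω] (P : Measure Ω) (B C : Set Ω) : ℝ :=
  (P (B ∩ C)).toReal / (P C).toReal

/-- identification of the variant-specific relative causal effect conditional
on exposure (CECE): under exchangeability, positivity, consistency, no effect on exposure,
exposure necessity and no cross-infectivity,
`P(Y^1 = j | E^1 = j) / P(Y^0 = j | E^0 = j) = P(Y = j | A = 1) / P(Y = j | A = 0)`. -/
theorem stmt0
    {Ω : Type*} [MeasurableSpace Ω] (P : Measure Ω) [IsProbabilityMeasure P]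
    (A : Ω → Fin 2) (E Y : Ω → Fin 3)
    (Ea Ya : Fin 2 → Ω → Fin 3)
    (hA : Measurable A) (hE : Measurable E) (hY : Measurable Y)
    (hEa : ∀ a, Measurable (Ea a)) (hYa : ∀ a, Measurable (Ya a))
    -- exchangeability: (Y^a, E^a) ⫫ A
    (exch : ∀ (a : Fin 2) (y e : Fin 3) (t : Fin 2),
      P ({ω | Ya a ω = y} ∩ {ω | Ea a ω = e} ∩ {ω | A ω = t})
        = P ({ω | Ya a ω = y} ∩ {ω | Ea a ω = e}) * P {ω | A ω = t})
    -- positivity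
    (pos : ∀ a : Fin 2, 0 < prR P {ω | A ω = a})
    -- consistency
    (cons : ∀ a : Fin 2, ∀ᵐ ω ∂P, A ω = a → Ea a ω = E ω ∧ Ya a ω = Y ω)
    -- no effect on exposure
    (noexp : ∀ᵐ ω ∂P, Ea 1 ω = Ea 0 ω)
    -- exposure necessity
    (expnec : ∀ a : Fin 2, ∀ᵐ ω ∂P, Ea a ω = 0 → Ya a ω = 0)
    -- no cross-infectivity
    (nocross : ∀ a : Fin 2, ∀ᵐ ω ∂P, (Ea a ω = 1 → Ya a ω ≠ 2) ∧ (Ea a ω = 2 → Ya a ω ≠ 1))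
    (j : Fin 3) (hj : j = 1 ∨ j = 2)
    (posE : ∀ a : Fin 2, 0 < prR P {ω | Ea a ω = j})
    (posYA0 : 0 < cprR P {ω | Y ω = j} {ω | A ω = 0}) :
    cprR P {ω | Ya 1 ω = j} {ω | Ea 1 ω = j} / cprR P {ω | Ya 0 ω = j} {ω | Ea 0 ω = j}
      = cprR P {ω | Y ω = j} {ω | A ω = 1} / cprR P {ω | Y ω = j} {ω | A ω = 0} := by
  have h3 : ∀ x : Fin 3, x = 0 ∨ x = 1 ∨ x = 2 := by decide
  have mA : ∀ t : Fin 2, MeasurableSet {ω | A ω = t} :=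
    fun t => hA (measurableSet_singleton t)
  -- marginalization of exchangeability over exposure values
  have marg : ∀ (a t : Fin 2),
      P ({ω | Ya a ω = j} ∩ {ω | A ω = t}) = P {ω | Ya a ω = j} * P {ω | A ω = t} := by
    intro a t
    have hsplit : ∀ T : Set Ω,
        {ω | Ya a ω = j} ∩ T =
          ({ω | Ya a ω = j} ∩ {ω | Ea a ω = 0} ∩ T) ∪
          (({ω | Ya a ω = j} ∩ {ω | Ea a ω = 1} ∩ T) ∪
           ({ω | Ya a ω = j} ∩ {ω | Ea a ω = 2} ∩ T)) := by
      intro T; ext ω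
      simp only [Set.mem_inter_iff, Set.mem_union, Set.mem_setOf_eq]
      have := h3 (Ea a ω); tauto
    have hd12 : ∀ T : Set Ω, Disjoint
        ({ω | Ya a ω = j} ∩ {ω | Ea a ω = 1} ∩ T)
        ({ω | Ya a ω = j} ∩ {ω | Ea a ω = 2} ∩ T) := by
      intro T
      rw [Set.disjoint_left]
      rintro ω ⟨⟨_, h1⟩, _⟩ ⟨⟨_, h2⟩, _⟩
      simp only [Set.mem_setOf_eq] at h1 h2
      rw [h1] at h2; exact absurd h2 (by decide)
    have hd0 : ∀ T : Set Ω, Disjoint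
        ({ω | Ya a ω = j} ∩ {ω | Ea a ω = 0} ∩ T)
        (({ω | Ya a ω = j} ∩ {ω | Ea a ω = 1} ∩ T) ∪
         ({ω | Ya a ω = j} ∩ {ω | Ea a ω = 2} ∩ T)) := by
      intro T
      rw [Set.disjoint_left]
      rintro ω ⟨⟨_, h0⟩, _⟩ (⟨⟨_, h1⟩, _⟩ | ⟨⟨_, h2⟩, _⟩) <;>
        simp only [Set.mem_setOf_eq] at *
      · rw [h0] at h1; exact absurd h1 (by decide)
      · rw [h0] at h2; exact absurd h2 (by decide)
    have mS : ∀ (e : Fin 3) (T : Set Ω), MeasurableSet T →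
        MeasurableSet ({ω | Ya a ω = j} ∩ {ω | Ea a ω = e} ∩ T) :=
      fun e T hT => ((hYa a (measurableSet_singleton j)).inter
        (hEa a (measurableSet_singleton e))).inter hT
    have key : ∀ T : Set Ω, MeasurableSet T →
        P ({ω | Ya a ω = j} ∩ T) =
          P ({ω | Ya a ω = j} ∩ {ω | Ea a ω = 0} ∩ T)
          + (P ({ω | Ya a ω = j} ∩ {ω | Ea a ω = 1} ∩ T)
          + P ({ω | Ya a ω = j} ∩ {ω | Ea a ω = 2} ∩ T)) := by
      intro T hT
      rw [hsplit T, measure_union (hd0 T) ((mS 1 T hT).union (mS 2 T hT)),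
        measure_union (hd12 T) (mS 2 T hT)]
    have hfull : P {ω | Ya a ω = j} =
        P ({ω | Ya a ω = j} ∩ {ω | Ea a ω = 0})
        + (P ({ω | Ya a ω = j} ∩ {ω | Ea a ω = 1})
        + P ({ω | Ya a ω = j} ∩ {ω | Ea a ω = 2})) := by
      have := key Set.univ MeasurableSet.univ
      simpa [Set.inter_univ] using this
    rw [key _ (mA t), exch a j 0 t, exch a j 1 t, exch a j 2 t, hfull, add_mul, add_mul]
  -- consistency transfer
  have consEq : ∀ a : Fin 2,
      P ({ω | Y ω = j} ∩ {ω | A ω = a}) = P ({ω | Ya a ω = j} ∩ {ω | A ω = a}) := by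
    intro a
    apply measure_congr
    filter_upwards [cons a] with ω hω
    simp only [Set.mem_inter_iff, Set.mem_setOf_eq, eq_iff_iff]
    constructor
    · rintro ⟨hy, ha⟩; exact ⟨(hω ha).2.trans hy, ha⟩
    · rintro ⟨hy, ha⟩; exact ⟨((hω ha).2.symm.trans hy), ha⟩
  -- a.e. inclusion {Ya = j} ⊆ {Ea = j}
  have incl : ∀ a : Fin 2,
      P ({ω | Ya a ω = j} ∩ {ω | Ea a ω = j}) = P {ω | Ya a ω = j} := by
    intro a
    apply measure_congr
    filter_upwards [expnec a, nocross a] with ω h0 hc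
    simp only [Set.mem_inter_iff, Set.mem_setOf_eq, eq_iff_iff]
    constructor
    · exact fun h => h.1
    · intro hy
      refine ⟨hy, ?_⟩
      rcases hj with hj | hj <;> subst hj
      · rcases h3 (Ea a ω) with he | he | he
        · exact absurd (hy.symm.trans (h0 he)) (by decide)
        · exact he
        · exact absurd hy (hc.2 he)
      · rcases h3 (Ea a ω) with he | he | he
        · exact absurd (hy.symm.trans (h0 he)) (by decide)
        · exact absurd hy (hc.1 he)
        · exact he
  -- no effect on exposure
  have eEq : P {ω | Ea 1 ω = j} = P {ω | Ea 0 ω = j} := by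
    apply measure_congr
    filter_upwards [noexp] with ω hω
    show (Ea 1 ω = j) = (Ea 0 ω = j)
    rw [hω]
  -- identification of the arms
  have hcA : ∀ a : Fin 2,
      cprR P {ω | Y ω = j} {ω | A ω = a} = (P {ω | Ya a ω = j}).toReal := by
    intro a
    have hp := pos a
    unfold prR at hp
    unfold cprR
    rw [consEq a, marg a a, ENNReal.toReal_mul, mul_div_assoc, div_self hp.ne', mul_one]
  have hcE : ∀ a : Fin 2,
      cprR P {ω | Ya a ω = j} {ω | Ea a ω = j}
        = (P {ω | Ya a ω = j}).toReal / (P {ω | Ea a ω = j}).toReal := by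
    intro a
    unfold cprR
    rw [incl a]
  -- real arithmetic
  have he0 : 0 < (P {ω | Ea 0 ω = j}).toReal := posE 0
  have hy0 : 0 < (P {ω | Ya 0 ω = j}).toReal := by rw [← hcA 0]; exact posYA0
  rw [hcA 0, hcA 1, hcE 0, hcE 1, eEq]
  field_simp
end

section
/- Under the core RCT assumptions (exchangeability, positivity, consistency) together with no effect on exposure, exposure necessity and no cross-infectivity, and provided all conditioning events below have positive probability and all denominators are nonzero, the contrast conditional on subtype-specific exposure CCS := [P(Y^1 = 1 | E^1 = 1)/P(Y^0 = 1 | E^0 = 1)] / [P(Y^1 = 2 | E^1 = 2)/P(Y^0 = 2 | E^0 = 2)] and the contrast conditional on exposure CCE := [P(Y^1 = 1 | E^1 ≠ 0)/P(Y^0 = 1 | E^0 ≠ 0)] / [P(Y^1 = 2 | E^1 ≠ 0)/P(Y^0 = 2 | E^0 ≠ 0)] are both identified and equal: CCS = CCE = [P(Y = 1 | A = 1)/P(Y = 1 | A = 0)] / [P(Y = 2 | A = 1)/P(Y = 2 | A = 0)]. -/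
open MeasureTheory

private lemma fin3_cases (x : Fin 3) : x = 0 ∨ x = 1 ∨ x = 2 := by fin_cases x <;> simp

/-- If a.e. `B ⊆ C` and `C` is measurable, then `P (B ∩ C) = P B`. -/
private lemma meas_inter_of_ae {Ω : Type*} [MeasurableSpace Ω] (P : Measure Ω)
    {B C : Set Ω} (hC : MeasurableSet C) (h : ∀ᵐ ω ∂P, ω ∈ B → ω ∈ C) :
    P (B ∩ C) = P B := by
  have h0 : P (B \ C) = 0 := by
    refine measure_mono_null ?_ (MeasureTheory.ae_iff.mp h)
    intro ω hω
    simp only [Set.mem_setOf_eq, Classical.not_imp]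
    exact ⟨hω.1, hω.2⟩
  have := measure_inter_add_diff (μ := P) B hC
  rw [h0, add_zero] at this
  exact this

/-- under exchangeability, positivity, consistency, no effect on exposure,
exposure necessity and no cross-infectivity, the contrast conditional on subtype-specific
exposure (CCS) and the contrast conditional on exposure (CCE) are both identified and
equal to the ratio of observed relative risks. -/
theorem stmt1
    {Ω : Type*} [MeasurableSpace Ω] (P : Measure Ω) [IsProbabilityMeasure P]
    (A : Ω → Fin 2) (E Y : Ω → Fin 3)
    (Ea Ya : Fin 2 → Ω → Fin 3)
    (hA : Measurable A) (hE : Measurable E) (hY : Measurable Y)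
    (hEa : ∀ a, Measurable (Ea a)) (hYa : ∀ a, Measurable (Ya a))
    -- exchangeability: (Y^a, E^a) ⫫ A
    (exch : ∀ (a : Fin 2) (y e : Fin 3) (t : Fin 2),
      P ({ω | Ya a ω = y} ∩ {ω | Ea a ω = e} ∩ {ω | A ω = t})
        = P ({ω | Ya a ω = y} ∩ {ω | Ea a ω = e}) * P {ω | A ω = t})
    -- positivity
    (pos : ∀ a : Fin 2, 0 < prR P {ω | A ω = a})
    -- consistency
    (cons : ∀ a : Fin 2, ∀ᵐ ω ∂P, A ω = a → Ea a ω = E ω ∧ Ya a ω = Y ω)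
    -- no effect on exposure
    (noexp : ∀ᵐ ω ∂P, Ea 1 ω = Ea 0 ω)
    -- exposure necessity
    (expnec : ∀ a : Fin 2, ∀ᵐ ω ∂P, Ea a ω = 0 → Ya a ω = 0)
    -- no cross-infectivity
    (nocross : ∀ a : Fin 2, ∀ᵐ ω ∂P, (Ea a ω = 1 → Ya a ω ≠ 2) ∧ (Ea a ω = 2 → Ya a ω ≠ 1))
    -- all conditioning events have positive probability
    (posE : ∀ (a : Fin 2) (j : Fin 3), j = 1 ∨ j = 2 → 0 < prR P {ω | Ea a ω = j})
    (posEne : ∀ a : Fin 2, 0 < prR P {ω | Ea a ω ≠ 0})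
    -- all denominators are nonzero
    (d1 : cprR P {ω | Ya 0 ω = 1} {ω | Ea 0 ω = 1} ≠ 0)
    (d2 : cprR P {ω | Ya 0 ω = 2} {ω | Ea 0 ω = 2} ≠ 0)
    (d3 : cprR P {ω | Ya 1 ω = 2} {ω | Ea 1 ω = 2} ≠ 0)
    (d4 : cprR P {ω | Ya 0 ω = 1} {ω | Ea 0 ω ≠ 0} ≠ 0)
    (d5 : cprR P {ω | Ya 0 ω = 2} {ω | Ea 0 ω ≠ 0} ≠ 0)
    (d6 : cprR P {ω | Ya 1 ω = 2} {ω | Ea 1 ω ≠ 0} ≠ 0)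
    (d7 : cprR P {ω | Y ω = 1} {ω | A ω = 0} ≠ 0)
    (d8 : cprR P {ω | Y ω = 2} {ω | A ω = 0} ≠ 0)
    (d9 : cprR P {ω | Y ω = 2} {ω | A ω = 1} ≠ 0) :
    (cprR P {ω | Ya 1 ω = 1} {ω | Ea 1 ω = 1} / cprR P {ω | Ya 0 ω = 1} {ω | Ea 0 ω = 1})
        / (cprR P {ω | Ya 1 ω = 2} {ω | Ea 1 ω = 2} / cprR P {ω | Ya 0 ω = 2} {ω | Ea 0 ω = 2})
      = (cprR P {ω | Y ω = 1} {ω | A ω = 1} / cprR P {ω | Y ω = 1} {ω | A ω = 0})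
        / (cprR P {ω | Y ω = 2} {ω | A ω = 1} / cprR P {ω | Y ω = 2} {ω | A ω = 0})
    ∧ (cprR P {ω | Ya 1 ω = 1} {ω | Ea 1 ω ≠ 0} / cprR P {ω | Ya 0 ω = 1} {ω | Ea 0 ω ≠ 0})
        / (cprR P {ω | Ya 1 ω = 2} {ω | Ea 1 ω ≠ 0} / cprR P {ω | Ya 0 ω = 2} {ω | Ea 0 ω ≠ 0})
      = (cprR P {ω | Y ω = 1} {ω | A ω = 1} / cprR P {ω | Y ω = 1} {ω | A ω = 0})
        / (cprR P {ω | Y ω = 2} {ω | A ω = 1} / cprR P {ω | Y ω = 2} {ω | A ω = 0}) := by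
  classical
  -- measurability of the basic events
  have mE : ∀ (a : Fin 2) (j : Fin 3), MeasurableSet {ω | Ea a ω = j} :=
    fun a j => (hEa a) (measurableSet_singleton j)
  have mENe : ∀ (a : Fin 2), MeasurableSet {ω | Ea a ω ≠ 0} :=
    fun a => ((hEa a) (measurableSet_singleton 0)).compl
  have mYa : ∀ (a : Fin 2) (j : Fin 3), MeasurableSet {ω | Ya a ω = j} :=
    fun a j => (hYa a) (measurableSet_singleton j)
  have mA : ∀ (t : Fin 2), MeasurableSet {ω | A ω = t} :=
    fun t => hA (measurableSet_singleton t)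
  -- Step 5: Y^a ⫫ A (marginally)
  have indep : ∀ (a t : Fin 2) (y : Fin 3),
      P ({ω | Ya a ω = y} ∩ {ω | A ω = t}) = P {ω | Ya a ω = y} * P {ω | A ω = t} := by
    intro a t y
    have h1 : {ω | Ya a ω = y} ∩ {ω | A ω = t}
        = ⋃ e : Fin 3, ({ω | Ya a ω = y} ∩ {ω | Ea a ω = e} ∩ {ω | A ω = t}) := by
      ext ω
      simp only [Set.mem_iUnion, Set.mem_inter_iff, Set.mem_setOf_eq]
      constructor
      · rintro ⟨hy, ht⟩; exact ⟨Ea a ω, ⟨hy, rfl⟩, ht⟩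
      · rintro ⟨e, ⟨hy, _⟩, ht⟩; exact ⟨hy, ht⟩
    have h2 : {ω | Ya a ω = y}
        = ⋃ e : Fin 3, ({ω | Ya a ω = y} ∩ {ω | Ea a ω = e}) := by
      ext ω
      simp only [Set.mem_iUnion, Set.mem_inter_iff, Set.mem_setOf_eq]
      constructor
      · intro hy; exact ⟨Ea a ω, hy, rfl⟩
      · rintro ⟨e, hy, _⟩; exact hy
    have disj1 : Pairwise (Function.onFun Disjoint
        fun e : Fin 3 => {ω | Ya a ω = y} ∩ {ω | Ea a ω = e} ∩ {ω | A ω = t}) := by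
      intro i j hij
      simp only [Function.onFun, Set.disjoint_left]
      rintro ω ⟨⟨_, he⟩, _⟩ ⟨⟨_, he'⟩, _⟩
      exact hij (he ▸ he' ▸ rfl)
    have disj2 : Pairwise (Function.onFun Disjoint
        fun e : Fin 3 => {ω | Ya a ω = y} ∩ {ω | Ea a ω = e}) := by
      intro i j hij
      simp only [Function.onFun, Set.disjoint_left]
      rintro ω ⟨_, he⟩ ⟨_, he'⟩
      exact hij (he ▸ he' ▸ rfl)
    have L : P ({ω | Ya a ω = y} ∩ {ω | A ω = t})
        = ∑ e : Fin 3, P ({ω | Ya a ω = y} ∩ {ω | Ea a ω = e} ∩ {ω | A ω = t}) := by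
      rw [h1, measure_iUnion disj1 (fun e => ((mYa a y).inter (mE a e)).inter (mA t)),
        tsum_fintype]
    have R : P {ω | Ya a ω = y}
        = ∑ e : Fin 3, P ({ω | Ya a ω = y} ∩ {ω | Ea a ω = e}) := by
      conv_lhs => rw [h2]
      rw [measure_iUnion disj2 (fun e => (mYa a y).inter (mE a e)), tsum_fintype]
    rw [L, R, Finset.sum_mul]
    exact Finset.sum_congr rfl fun e _ => exch a y e t
  -- Step 4: consistency
  have consEq : ∀ (a : Fin 2) (j : Fin 3),
      P ({ω | Y ω = j} ∩ {ω | A ω = a}) = P ({ω | Ya a ω = j} ∩ {ω | A ω = a}) := by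
    intro a j
    apply measure_congr
    filter_upwards [cons a] with ω h
    change (Y ω = j ∧ A ω = a) = (Ya a ω = j ∧ A ω = a)
    by_cases hAa : A ω = a
    · obtain ⟨_, hy⟩ := h hAa
      rw [hy]
    · simp [hAa]
  -- Step 3: no effect on exposure
  have expEq : ∀ (e : Fin 3), P {ω | Ea 1 ω = e} = P {ω | Ea 0 ω = e} := by
    intro e
    apply measure_congr
    filter_upwards [noexp] with ω h
    change (Ea 1 ω = e) = (Ea 0 ω = e)
    rw [h]
  have expEqNe : P {ω | Ea 1 ω ≠ 0} = P {ω | Ea 0 ω ≠ 0} := by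
    apply measure_congr
    filter_upwards [noexp] with ω h
    change (Ea 1 ω ≠ 0) = (Ea 0 ω ≠ 0)
    rw [h]
  -- Steps 1/2: a.e. {Y^a = j} ⊆ {E^a = j} and ⊆ {E^a ≠ 0}, for j ∈ {1,2}
  have int1 : ∀ (a : Fin 2) (j : Fin 3), j = 1 ∨ j = 2 →
      P ({ω | Ya a ω = j} ∩ {ω | Ea a ω = j}) = P {ω | Ya a ω = j} := by
    intro a j hj
    refine meas_inter_of_ae P (mE a j) ?_
    filter_upwards [expnec a, nocross a] with ω h1 h2 hy
    rcases fin3_cases (Ea a ω) with he | he | he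
    · exfalso
      have h0 := h1 he
      rw [hy] at h0
      rcases hj with rfl | rfl <;> exact absurd h0 (by decide)
    · rcases hj with rfl | rfl
      · exact he
      · exact absurd hy (h2.1 he)
    · rcases hj with rfl | rfl
      · exact absurd hy (h2.2 he)
      · exact he
  have int2 : ∀ (a : Fin 2) (j : Fin 3), j = 1 ∨ j = 2 →
      P ({ω | Ya a ω = j} ∩ {ω | Ea a ω ≠ 0}) = P {ω | Ya a ω = j} := by
    intro a j hj
    refine meas_inter_of_ae P (mENe a) ?_
    filter_upwards [expnec a] with ω h1 hy
    intro he
    have h0 := h1 he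
    rw [hy] at h0
    rcases hj with rfl | rfl <;> exact absurd h0 (by decide)
  -- identification of the three families of conditional probabilities
  have hccs : ∀ (a : Fin 2) (j : Fin 3), j = 1 ∨ j = 2 →
      cprR P {ω | Ya a ω = j} {ω | Ea a ω = j}
        = (P {ω | Ya a ω = j}).toReal / (P {ω | Ea 0 ω = j}).toReal := by
    intro a j hj
    unfold cprR
    rw [int1 a j hj]
    congr 2
    fin_cases a
    · rfl
    · exact expEq j
  have hcce : ∀ (a : Fin 2) (j : Fin 3), j = 1 ∨ j = 2 →
      cprR P {ω | Ya a ω = j} {ω | Ea a ω ≠ 0}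
        = (P {ω | Ya a ω = j}).toReal / (P {ω | Ea 0 ω ≠ 0}).toReal := by
    intro a j hj
    unfold cprR
    rw [int2 a j hj]
    congr 2
    fin_cases a
    · rfl
    · exact expEqNe
  have hobs : ∀ (a : Fin 2) (j : Fin 3),
      cprR P {ω | Y ω = j} {ω | A ω = a} = (P {ω | Ya a ω = j}).toReal := by
    intro a j
    unfold cprR
    rw [consEq a j, indep a a j, ENNReal.toReal_mul, mul_div_assoc, div_self, mul_one]
    exact (pos a).ne'
  -- nonzero facts
  have he1 : (P {ω | Ea 0 ω = 1}).toReal ≠ 0 := (posE 0 1 (Or.inl rfl)).ne'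
  have he2 : (P {ω | Ea 0 ω = 2}).toReal ≠ 0 := (posE 0 2 (Or.inr rfl)).ne'
  have heN : (P {ω | Ea 0 ω ≠ 0}).toReal ≠ 0 := (posEne 0).ne'
  have hq01 : (P {ω | Ya 0 ω = 1}).toReal ≠ 0 := by
    rw [hccs 0 1 (Or.inl rfl)] at d1
    intro h; exact d1 (by rw [h, zero_div])
  have hq02 : (P {ω | Ya 0 ω = 2}).toReal ≠ 0 := by
    rw [hccs 0 2 (Or.inr rfl)] at d2
    intro h; exact d2 (by rw [h, zero_div])
  have hq12 : (P {ω | Ya 1 ω = 2}).toReal ≠ 0 := by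
    rw [hccs 1 2 (Or.inr rfl)] at d3
    intro h; exact d3 (by rw [h, zero_div])
  constructor
  · rw [hccs 1 1 (Or.inl rfl), hccs 0 1 (Or.inl rfl), hccs 1 2 (Or.inr rfl),
      hccs 0 2 (Or.inr rfl), hobs 1 1, hobs 0 1, hobs 1 2, hobs 0 2]
    field_simp
  · rw [hcce 1 1 (Or.inl rfl), hcce 0 1 (Or.inl rfl), hcce 1 2 (Or.inr rfl),
      hcce 0 2 (Or.inr rfl), hobs 1 1, hobs 0 1, hobs 1 2, hobs 0 2]
    field_simp
end

section
/- Under the core RCT assumptions (exchangeability, positivity, consistency) together with exposure necessity, no cross-infectivity, and the no-relative-effect-on-exposure assumption P(E^1 = 1) · P(E^0 = 2) = P(E^0 = 1) · P(E^1 = 2) (in place of the stronger assumption E^1 = E^0), and provided all conditioning events below have positive probability and all denominators are nonzero, the contrast conditional on subtype-specific exposure is identified: [P(Y^1 = 1 | E^1 = 1)/P(Y^0 = 1 | E^0 = 1)] / [P(Y^1 = 2 | E^1 = 2)/P(Y^0 = 2 | E^0 = 2)] = [P(Y = 1 | A = 1)/P(Y = 1 | A = 0)] / [P(Y = 2 |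 A = 1)/P(Y = 2 | A = 0)]. -/
/-!
Exposure necessity and no cross-infectivity make `{Y^a = j}` almost surely a subset of
`{E^a = j}` for `j ≠ 0`, so `P(Y^a = j | E^a = j) = P(Y^a = j) / P(E^a = j)`. Exchangeability,
marginalised over `E^a`, and consistency give `P(Y = j | A = a) = P(Y^a = j)`. In the ratio of
ratios the exposure probabilities then leave the factor
`P(E^0 = 1) P(E^1 = 2) / (P(E^1 = 1) P(E^0 = 2))`, which is `1` by the no-relative-effect assumption.
-/

open MeasureTheory

section Marginalisation

variable {α ι : Type*} [MeasurableSpace α] [MeasurableSpace ι] [Countable ι]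
  [MeasurableSingletonClass ι] {μ : Measure α} {f : α → ι}

theorem measure_eq_tsum_inter_preimage_singleton (hf : Measurable f) (s : Set α) :
    μ s = ∑' i, μ (s ∩ f ⁻¹' {i}) := by
  have hcover : (⋃ i, f ⁻¹' {i}) = Set.univ := Set.iUnion_eq_univ_iff.2 fun x => ⟨f x, rfl⟩
  calc μ s = μ.restrict (⋃ i, f ⁻¹' {i}) s := by rw [hcover, Measure.restrict_univ]
    _ = ∑' i, μ (s ∩ f ⁻¹' {i}) := by
      rw [Measure.restrict_iUnion (pairwise_disjoint_fiber f)
          fun i => hf (measurableSet_singleton i), Measure.sum_apply_of_countable]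
      simp_rw [Measure.restrict_apply' (hf (measurableSet_singleton _))]

theorem measure_inter_eq_mul_of_forall_inter_preimage_singleton (hf : Measurable f)
    {s t : Set α} (h : ∀ i, μ (s ∩ f ⁻¹' {i} ∩ t) = μ (s ∩ f ⁻¹' {i}) * μ t) :
    μ (s ∩ t) = μ s * μ t := by
  rw [measure_eq_tsum_inter_preimage_singleton hf (s ∩ t),
    measure_eq_tsum_inter_preimage_singleton hf s, ← ENNReal.tsum_mul_right]
  simp_rw [Set.inter_right_comm s t, h]

end Marginalisation

section ConditionalProbability

variable {Ω : Type*} [MeasurableSpace Ω] {P : Measure Ω} {B C : Set Ω}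

theorem cprR_eq_prR_of_measure_inter_eq_mul (hBC : P (B ∩ C) = P B * P C) (hC : prR P C ≠ 0) :
    cprR P B C = prR P B := by
  rw [cprR, hBC, ENNReal.toReal_mul]
  exact mul_div_cancel_right₀ _ hC

theorem cprR_eq_div_of_ae_subset (h : B ≤ᵐ[P] C) : cprR P B C = prR P B / prR P C := by
  have hinter : (B ∩ C : Set Ω) =ᵐ[P] B := by
    filter_upwards [h] with ω hω
    exact propext ⟨And.left, fun hB => ⟨hB, hω hB⟩⟩
  rw [cprR, measure_congr hinter, prR, prR]

end ConditionalProbability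

section PotentialOutcomes

variable {Ω α β γ : Type*} [MeasurableSpace Ω] {P : Measure Ω}

theorem cprR_eq_prR_potential_outcome [MeasurableSpace γ] [Countable γ]
    [MeasurableSingletonClass γ] {A : Ω → α} {Y Y' : Ω → β} {E' : Ω → γ} {a : α} {y : β}
    (hE' : Measurable E')
    (exch : ∀ e, P ({ω | Y' ω = y} ∩ {ω | E' ω = e} ∩ {ω | A ω = a})
      = P ({ω | Y' ω = y} ∩ {ω | E' ω = e}) * P {ω | A ω = a})
    (cons : ∀ᵐ ω ∂P, A ω = a → Y' ω = Y ω) (pos : prR P {ω | A ω = a} ≠ 0) :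
    cprR P {ω | Y ω = y} {ω | A ω = a} = prR P {ω | Y' ω = y} := by
  have hcons : ({ω | Y ω = y} ∩ {ω | A ω = a} : Set Ω)
      =ᵐ[P] ({ω | Y' ω = y} ∩ {ω | A ω = a} : Set Ω) := by
    filter_upwards [cons] with ω hω
    exact propext ⟨fun ⟨hY, hA⟩ => ⟨(hω hA).trans hY, hA⟩,
      fun ⟨hY, hA⟩ => ⟨(hω hA).symm.trans hY, hA⟩⟩
  calc cprR P {ω | Y ω = y} {ω | A ω = a} = cprR P {ω | Y' ω = y} {ω | A ω = a} := by
        rw [cprR, cprR, measure_congr hcons]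
    _ = prR P {ω | Y' ω = y} := cprR_eq_prR_of_measure_inter_eq_mul
        (measure_inter_eq_mul_of_forall_inter_preimage_singleton hE' exch) pos

theorem infection_ae_subset_exposure {E' Y' : Ω → Fin 3}
    (expnec : ∀ᵐ ω ∂P, E' ω = 0 → Y' ω = 0)
    (nocross : ∀ᵐ ω ∂P, (E' ω = 1 → Y' ω ≠ 2) ∧ (E' ω = 2 → Y' ω ≠ 1)) {j : Fin 3} (hj : j ≠ 0) :
    {ω | Y' ω = j} ≤ᵐ[P] {ω | E' ω = j} := by
  have hpointwise : ∀ e y : Fin 3,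
      y ≠ 0 → (e = 0 → y = 0) → (e = 1 → y ≠ 2) ∧ (e = 2 → y ≠ 1) → e = y := by decide
  filter_upwards [expnec, nocross] with ω hnec hcross (hY : Y' ω = j)
  exact (hpointwise _ _ (hY ▸ hj) hnec hcross).trans hY

end PotentialOutcomes

theorem div_div_div_div_eq_of_mul_eq_mul {K : Type*} [Field K] {a b c d p q r s : K}
    (h : p * s = q * r) (hp : p ≠ 0) (hs : s ≠ 0) :
    ((a / p) / (b / q)) / ((c / r) / (d / s)) = (a / b) / (c / d) := by
  calc ((a / p) / (b / q)) / ((c / r) / (d / s)) = (a / b) / (c / d) * ((q * r) / (p * s)) := by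
        simp only [div_eq_mul_inv, mul_inv, inv_inv]
        ring
    _ = (a / b) / (c / d) := by rw [← h, div_self (mul_ne_zero hp hs), mul_one]

theorem stmt2_general
    {Ω : Type*} [MeasurableSpace Ω] (P : Measure Ω)
    (A : Ω → Fin 2) (E Y : Ω → Fin 3)
    (Ea Ya : Fin 2 → Ω → Fin 3)
    (hEa : ∀ a, Measurable (Ea a))
    -- exchangeability: (Y^a, E^a) ⫫ A
    (exch : ∀ (a : Fin 2) (y e : Fin 3) (t : Fin 2),
      P ({ω | Ya a ω = y} ∩ {ω | Ea a ω = e} ∩ {ω | A ω = t})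
        = P ({ω | Ya a ω = y} ∩ {ω | Ea a ω = e}) * P {ω | A ω = t})
    -- positivity
    (pos : ∀ a : Fin 2, 0 < prR P {ω | A ω = a})
    -- consistency
    (cons : ∀ a : Fin 2, ∀ᵐ ω ∂P, A ω = a → Ea a ω = E ω ∧ Ya a ω = Y ω)
    -- exposure necessity
    (expnec : ∀ a : Fin 2, ∀ᵐ ω ∂P, Ea a ω = 0 → Ya a ω = 0)
    -- no cross-infectivity
    (nocross : ∀ a : Fin 2, ∀ᵐ ω ∂P, (Ea a ω = 1 → Ya a ω ≠ 2) ∧ (Ea a ω = 2 → Ya a ω ≠ 1))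
    -- no relative effect on exposure
    (ratioexp : prR P {ω | Ea 1 ω = 1} * prR P {ω | Ea 0 ω = 2}
      = prR P {ω | Ea 0 ω = 1} * prR P {ω | Ea 1 ω = 2})
    -- all conditioning events have positive probability
    (posE : ∀ (a : Fin 2) (j : Fin 3), j = 1 ∨ j = 2 → 0 < prR P {ω | Ea a ω = j}) :
    (cprR P {ω | Ya 1 ω = 1} {ω | Ea 1 ω = 1} / cprR P {ω | Ya 0 ω = 1} {ω | Ea 0 ω = 1})
        / (cprR P {ω | Ya 1 ω = 2} {ω | Ea 1 ω = 2} / cprR P {ω | Ya 0 ω = 2} {ω | Ea 0 ω = 2})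
      = (cprR P {ω | Y ω = 1} {ω | A ω = 1} / cprR P {ω | Y ω = 1} {ω | A ω = 0})
        / (cprR P {ω | Y ω = 2} {ω | A ω = 1} / cprR P {ω | Y ω = 2} {ω | A ω = 0}) := by
  have hobserved : ∀ a j, cprR P {ω | Y ω = j} {ω | A ω = a} = prR P {ω | Ya a ω = j} :=
    fun a j => cprR_eq_prR_potential_outcome (hEa a) (exch a j · a)
      ((cons a).mono fun _ h hA => (h hA).2) (pos a).ne'
  have hexposed : ∀ a (j : Fin 3), j ≠ 0 →
      cprR P {ω | Ya a ω = j} {ω | Ea a ω = j} = prR P {ω | Ya a ω = j} / prR P {ω | Ea a ω = j} :=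
    fun a _ hj => cprR_eq_div_of_ae_subset (infection_ae_subset_exposure (expnec a) (nocross a) hj)
  simp only [hobserved, hexposed _ (1 : Fin 3) (by decide), hexposed _ (2 : Fin 3) (by decide)]
  exact div_div_div_div_eq_of_mul_eq_mul ratioexp (posE 1 1 (.inl rfl)).ne' (posE 0 2 (.inr rfl)).ne'

/-- identification of the CCS under the weaker no-relative-effect-on-exposure
assumption `P(E^1 = 1)·P(E^0 = 2) = P(E^0 = 1)·P(E^1 = 2)` (in place of `E^1 = E^0`),
together with exchangeability, positivity, consistency, exposure necessity, and
no cross-infectivity. -/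
theorem stmt2
    {Ω : Type*} [MeasurableSpace Ω] (P : Measure Ω) [IsProbabilityMeasure P]
    (A : Ω → Fin 2) (E Y : Ω → Fin 3)
    (Ea Ya : Fin 2 → Ω → Fin 3)
    (hA : Measurable A) (hE : Measurable E) (hY : Measurable Y)
    (hEa : ∀ a, Measurable (Ea a)) (hYa : ∀ a, Measurable (Ya a))
    -- exchangeability: (Y^a, E^a) ⫫ A
    (exch : ∀ (a : Fin 2) (y e : Fin 3) (t : Fin 2),
      P ({ω | Ya a ω = y} ∩ {ω | Ea a ω = e} ∩ {ω | A ω = t})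
        = P ({ω | Ya a ω = y} ∩ {ω | Ea a ω = e}) * P {ω | A ω = t})
    -- positivity
    (pos : ∀ a : Fin 2, 0 < prR P {ω | A ω = a})
    -- consistency
    (cons : ∀ a : Fin 2, ∀ᵐ ω ∂P, A ω = a → Ea a ω = E ω ∧ Ya a ω = Y ω)
    -- exposure necessity
    (expnec : ∀ a : Fin 2, ∀ᵐ ω ∂P, Ea a ω = 0 → Ya a ω = 0)
    -- no cross-infectivity
    (nocross : ∀ a : Fin 2, ∀ᵐ ω ∂P, (Ea a ω = 1 → Ya a ω ≠ 2) ∧ (Ea a ω = 2 → Ya a ω ≠ 1))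
    -- no relative effect on exposure
    (ratioexp : prR P {ω | Ea 1 ω = 1} * prR P {ω | Ea 0 ω = 2}
      = prR P {ω | Ea 0 ω = 1} * prR P {ω | Ea 1 ω = 2})
    -- all conditioning events have positive probability
    (posE : ∀ (a : Fin 2) (j : Fin 3), j = 1 ∨ j = 2 → 0 < prR P {ω | Ea a ω = j})
    -- all denominators are nonzero
    (d1 : cprR P {ω | Ya 0 ω = 1} {ω | Ea 0 ω = 1} ≠ 0)
    (d2 : cprR P {ω | Ya 0 ω = 2} {ω | Ea 0 ω = 2} ≠ 0)
    (d3 : cprR P {ω | Ya 1 ω = 2} {ω | Ea 1 ω = 2} ≠ 0)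
    (d4 : cprR P {ω | Y ω = 1} {ω | A ω = 0} ≠ 0)
    (d5 : cprR P {ω | Y ω = 2} {ω | A ω = 0} ≠ 0)
    (d6 : cprR P {ω | Y ω = 2} {ω | A ω = 1} ≠ 0) :
    (cprR P {ω | Ya 1 ω = 1} {ω | Ea 1 ω = 1} / cprR P {ω | Ya 0 ω = 1} {ω | Ea 0 ω = 1})
        / (cprR P {ω | Ya 1 ω = 2} {ω | Ea 1 ω = 2} / cprR P {ω | Ya 0 ω = 2} {ω | Ea 0 ω = 2})
      = (cprR P {ω | Y ω = 1} {ω | A ω = 1} / cprR P {ω | Y ω = 1} {ω | A ω = 0})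
        / (cprR P {ω | Y ω = 2} {ω | A ω = 1} / cprR P {ω | Y ω = 2} {ω | A ω = 0}) :=
  stmt2_general P A E Y Ea Ya hEa exch pos cons expnec nocross ratioexp posE
end

section
/- Under the factual assumptions and exposure exchangeability, exposure consistency and exposure positivity for arm a = 1, for every l ∈ 𝓛 with all denominators nonzero, the effect of exposure under treatment conditional on L is identified: P(Y^{1,1} = 1 | L = l) / P(Y^{1,2} = 2 | L = l) = [P(Y = 1 | A = 1, L = l) / P(Y = 2 | A = 1, L = l)] · [P(E = 1 | A = 1, L = l) / P(E = 2 | A = 1, L = l)]^{-1}. -/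
open MeasureTheory

/-- identification of the effect of exposure under treatment (EET)
conditional on baseline covariates `L`:
`P(Y^{1,1}=1 | L=l) / P(Y^{1,2}=2 | L=l)
  = [P(Y=1 | A=1,L=l)/P(Y=2 | A=1,L=l)] · [P(E=1 | A=1,L=l)/P(E=2 | A=1,L=l)]⁻¹`. -/
theorem stmt4
    {Ω 𝓛 : Type*} [MeasurableSpace Ω] [MeasurableSpace 𝓛] [Fintype 𝓛]
    (P : Measure Ω) [IsProbabilityMeasure P]
    (A : Ω → Fin 2) (E Y : Ω → Fin 3) (L : Ω → 𝓛)
    (Ea : Fin 2 → Ω → Fin 3) (Yae : Fin 2 → Fin 3 → Ω → Fin 3)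
    (hA : Measurable A) (hE : Measurable E) (hY : Measurable Y) (hL : Measurable L)
    (hEa : ∀ a, Measurable (Ea a)) (hYae : ∀ a e, Measurable (Yae a e))
    -- factual exposure necessity
    (fnec : ∀ᵐ ω ∂P, E ω = 0 → Y ω = 0)
    -- factual no cross-infectivity
    (fnocross : ∀ᵐ ω ∂P, (E ω = 1 → Y ω ≠ 2) ∧ (E ω = 2 → Y ω ≠ 1))
    -- exposure exchangeability for arm a = 1: E^1 ⫫ A | L
    (exchE : ∀ (l : 𝓛) (e : Fin 3) (t : Fin 2),
      P ({ω | Ea 1 ω = e} ∩ {ω | A ω = t} ∩ {ω | L ω = l}) * P {ω | L ω = l}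
        = P ({ω | Ea 1 ω = e} ∩ {ω | L ω = l}) * P ({ω | A ω = t} ∩ {ω | L ω = l}))
    -- exposure exchangeability for arm a = 1: Y^{1,e} ⫫ A | L, e ∈ {1,2}
    (exchY : ∀ (l : 𝓛) (e : Fin 3), e = 1 ∨ e = 2 → ∀ (y : Fin 3) (t : Fin 2),
      P ({ω | Yae 1 e ω = y} ∩ {ω | A ω = t} ∩ {ω | L ω = l}) * P {ω | L ω = l}
        = P ({ω | Yae 1 e ω = y} ∩ {ω | L ω = l}) * P ({ω | A ω = t} ∩ {ω | L ω = l}))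
    -- exposure exchangeability for arm a = 1: Y^{1,e} ⫫ E^1 | A = 1, L
    (exchYE : ∀ (l : 𝓛) (e : Fin 3), e = 1 ∨ e = 2 → ∀ (y e' : Fin 3),
      P ({ω | Yae 1 e ω = y} ∩ {ω | Ea 1 ω = e'} ∩ ({ω | A ω = 1} ∩ {ω | L ω = l}))
          * P ({ω | A ω = 1} ∩ {ω | L ω = l})
        = P ({ω | Yae 1 e ω = y} ∩ ({ω | A ω = 1} ∩ {ω | L ω = l}))
          * P ({ω | Ea 1 ω = e'} ∩ ({ω | A ω = 1} ∩ {ω | L ω = l})))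
    -- exposure consistency for arm a = 1
    (consE : ∀ᵐ ω ∂P, A ω = 1 → Ea 1 ω = E ω)
    (consY : ∀ (e : Fin 3), e = 1 ∨ e = 2 → ∀ᵐ ω ∂P, A ω = 1 → E ω = e → Yae 1 e ω = Y ω)
    -- exposure positivity for arm a = 1
    (posL : ∀ l : 𝓛, 0 < prR P {ω | L ω = l})
    (posAE : ∀ (l : 𝓛) (e : Fin 3), e = 1 ∨ e = 2 →
      0 < cprR P ({ω | A ω = 1} ∩ {ω | E ω = e}) {ω | L ω = l})
    (l : 𝓛)
    -- all denominators are nonzero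
    (d1 : cprR P {ω | Yae 1 2 ω = 2} {ω | L ω = l} ≠ 0)
    (d2 : cprR P {ω | Y ω = 2} ({ω | A ω = 1} ∩ {ω | L ω = l}) ≠ 0)
    (d3 : cprR P {ω | E ω = 2} ({ω | A ω = 1} ∩ {ω | L ω = l}) ≠ 0)
    (d4 : cprR P {ω | E ω = 1} ({ω | A ω = 1} ∩ {ω | L ω = l}) ≠ 0) :
    cprR P {ω | Yae 1 1 ω = 1} {ω | L ω = l} / cprR P {ω | Yae 1 2 ω = 2} {ω | L ω = l}
      = (cprR P {ω | Y ω = 1} ({ω | A ω = 1} ∩ {ω | L ω = l})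
          / cprR P {ω | Y ω = 2} ({ω | A ω = 1} ∩ {ω | L ω = l}))
        * (cprR P {ω | E ω = 1} ({ω | A ω = 1} ∩ {ω | L ω = l})
          / cprR P {ω | E ω = 2} ({ω | A ω = 1} ∩ {ω | L ω = l}))⁻¹ := by
  classical
  have fin3 : ∀ x : Fin 3, x = 0 ∨ x = 1 ∨ x = 2 := by decide
  set T := {ω | A ω = 1} ∩ {ω | L ω = l} with hT
  have hPS : (0:ℝ) < (P {ω | L ω = l}).toReal := posL l
  have hPSne : P {ω | L ω = l} ≠ 0 := by
    intro h
    rw [h] at hPS; simp at hPS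
  have key : ∀ e : Fin 3, e = 1 ∨ e = 2 → (∀ᵐ ω ∂P, Y ω = e → E ω = e) →
      cprR P {ω | Yae 1 e ω = e} {ω | L ω = l}
        = cprR P {ω | Y ω = e} T / cprR P {ω | E ω = e} T := by
    intro e he hYE
    -- positivity
    have hpos := posAE l e he
    unfold cprR at hpos
    have hX : P (({ω | A ω = 1} ∩ {ω | E ω = e}) ∩ {ω | L ω = l}) ≠ 0 := by
      intro h
      rw [h] at hpos; simp at hpos
    have hXpos : 0 < P (({ω | A ω = 1} ∩ {ω | E ω = e}) ∩ {ω | L ω = l}) :=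
      pos_iff_ne_zero.mpr hX
    have hTsub : ({ω | A ω = 1} ∩ {ω | E ω = e}) ∩ {ω | L ω = l} ⊆ T := by
      intro ω hω
      exact ⟨hω.1.1, hω.2⟩
    have hPT : P T ≠ 0 := by
      intro h
      have := lt_of_lt_of_le hXpos (measure_mono hTsub)
      rw [h] at this; exact absurd this (lt_irrefl 0)
    have hPTr : (0:ℝ) < (P T).toReal :=
      ENNReal.toReal_pos hPT (measure_ne_top P T)
    have hETsub : ({ω | A ω = 1} ∩ {ω | E ω = e}) ∩ {ω | L ω = l} ⊆ {ω | E ω = e} ∩ T := by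
      intro ω hω
      exact ⟨hω.1.2, hω.1.1, hω.2⟩
    have hPET : P ({ω | E ω = e} ∩ T) ≠ 0 := by
      intro h
      have := lt_of_lt_of_le hXpos (measure_mono hETsub)
      rw [h] at this; exact absurd this (lt_irrefl 0)
    have hPETr : (0:ℝ) < (P ({ω | E ω = e} ∩ T)).toReal :=
      ENNReal.toReal_pos hPET (measure_ne_top P _)
    -- step A : exchangeability of Y^{1,e} and A given L
    have hA' := exchY l e he e 1
    have hassoc : {ω | Yae 1 e ω = e} ∩ {ω | A ω = 1} ∩ {ω | L ω = l}
        = {ω | Yae 1 e ω = e} ∩ T := by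
      rw [hT, Set.inter_assoc]
    rw [hassoc] at hA'
    -- step B : exchangeability of Y^{1,e} and E^1 given A=1, L
    have hB := exchYE l e he e e
    rw [← hT] at hB
    -- consistency rewrites
    have h1 : P ({ω | Ea 1 ω = e} ∩ T) = P ({ω | E ω = e} ∩ T) := by
      apply measure_congr
      rw [Filter.eventuallyEq_set]
      filter_upwards [consE] with ω h
      simp only [hT, Set.mem_inter_iff, Set.mem_setOf_eq]
      constructor
      · rintro ⟨h1, h2, h3⟩
        exact ⟨by rw [← h h2]; exact h1, h2, h3⟩
      · rintro ⟨h1, h2, h3⟩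
        exact ⟨by rw [h h2]; exact h1, h2, h3⟩
    have h2 : P ({ω | Yae 1 e ω = e} ∩ {ω | Ea 1 ω = e} ∩ T)
        = P ({ω | Y ω = e} ∩ T) := by
      apply measure_congr
      rw [Filter.eventuallyEq_set]
      filter_upwards [consE, consY e he, hYE] with ω hcE hcY hye
      simp only [hT, Set.mem_inter_iff, Set.mem_setOf_eq]
      constructor
      · rintro ⟨⟨hy, hea⟩, ha, hl⟩
        have hEe : E ω = e := by rw [← hcE ha]; exact hea
        exact ⟨by rw [← hcY ha hEe]; exact hy, ha, hl⟩
      · rintro ⟨hy, ha, hl⟩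
        have hEe : E ω = e := hye hy
        exact ⟨⟨by rw [hcY ha hEe]; exact hy, by rw [hcE ha]; exact hEe⟩, ha, hl⟩
    rw [h1, h2] at hB
    -- convert to real
    have hA'' : (P ({ω | Yae 1 e ω = e} ∩ T)).toReal * (P {ω | L ω = l}).toReal
        = (P ({ω | Yae 1 e ω = e} ∩ {ω | L ω = l})).toReal * (P T).toReal := by
      have := congrArg ENNReal.toReal hA'
      rwa [ENNReal.toReal_mul, ENNReal.toReal_mul] at this
    have hB'' : (P ({ω | Y ω = e} ∩ T)).toReal * (P T).toReal
        = (P ({ω | Yae 1 e ω = e} ∩ T)).toReal * (P ({ω | E ω = e} ∩ T)).toReal := by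
      have := congrArg ENNReal.toReal hB
      rwa [ENNReal.toReal_mul, ENNReal.toReal_mul] at this
    unfold cprR
    have hdd : ∀ x y t : ℝ, t ≠ 0 → x / t / (y / t) = x / y := by
      intro x y t ht
      rcases eq_or_ne y 0 with hy | hy
      · simp [hy]
      · field_simp
    rw [hdd _ _ _ (ne_of_gt hPTr)]
    rw [div_eq_div_iff (ne_of_gt hPS) (ne_of_gt hPETr)]
    calc (P ({ω | Yae 1 e ω = e} ∩ {ω | L ω = l})).toReal * (P ({ω | E ω = e} ∩ T)).toReal
        = ((P ({ω | Yae 1 e ω = e} ∩ {ω | L ω = l})).toReal * (P T).toReal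
            * (P ({ω | E ω = e} ∩ T)).toReal) / (P T).toReal := by
          rw [eq_div_iff (ne_of_gt hPTr)]; ring
      _ = ((P ({ω | Yae 1 e ω = e} ∩ T)).toReal * (P {ω | L ω = l}).toReal
            * (P ({ω | E ω = e} ∩ T)).toReal) / (P T).toReal := by rw [hA'']
      _ = ((P ({ω | Yae 1 e ω = e} ∩ T)).toReal * (P ({ω | E ω = e} ∩ T)).toReal)
            * (P {ω | L ω = l}).toReal / (P T).toReal := by ring
      _ = ((P ({ω | Y ω = e} ∩ T)).toReal * (P T).toReal)
            * (P {ω | L ω = l}).toReal / (P T).toReal := by rw [hB'']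
      _ = (P ({ω | Y ω = e} ∩ T)).toReal * (P {ω | L ω = l}).toReal := by
          rw [div_eq_iff (ne_of_gt hPTr)]; ring
  -- the two a.e. implications Y = e → E = e
  have hY1 : ∀ᵐ ω ∂P, Y ω = 1 → E ω = 1 := by
    filter_upwards [fnec, fnocross] with ω h1 h2 hy
    rcases fin3 (E ω) with h | h | h
    · exact absurd (h1 h) (by rw [hy]; decide)
    · exact h
    · exact absurd hy (h2.2 h)
  have hY2 : ∀ᵐ ω ∂P, Y ω = 2 → E ω = 2 := by
    filter_upwards [fnec, fnocross] with ω h1 h2 hy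
    rcases fin3 (E ω) with h | h | h
    · exact absurd (h1 h) (by rw [hy]; decide)
    · exact absurd hy (h2.1 h)
    · exact h
  have k1 := key 1 (Or.inl rfl) hY1
  have k2 := key 2 (Or.inr rfl) hY2
  rw [k1, k2]
  field_simp
end

section
/- Under the factual assumptions, exposure exchangeability/consistency/positivity for both arms a ∈ {0,1}, and the conditional no-relative-effect-on-exposure assumption P(E^1 = 1 | L = l) · P(E^0 = 2 | L = l) = P(E^0 = 1 | L = l) · P(E^1 = 2 | L = l) for all l, and provided all denominators are nonzero, the effect with intervened exposure conditional on L is identified: [P(Y^{1,1} = 1 | L = l)/P(Y^{0,1} = 1 | L = l)] / [P(Y^{1,2} = 2 | L = l)/P(Y^{0,2} = 2 | L = l)] = [P(Y = 1 | A = 1, L = l)/P(Y = 1 | A = 0, L = l)] / [P(Y = 2 | A = 1, L = l)/P(Y = 2 | A = 0, L = l)] for every l ∈ 𝓛. -/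
open MeasureTheory

/-!
Fix a stratum `L = l`, an arm `a` and a variant `e ∈ {1, 2}`. By consistency, and because a.s.
infection by variant `e` forces exposure to `e`, the events `{Y = e} ∩ {A = a}` and
`{Y^{a,e} = e} ∩ {E^a = e} ∩ {A = a}` agree a.s. Exchangeability then factors
`P(Y = e | A = a, L = l) = P(Y^{a,e} = e | L = l) · P(E^a = e | L = l)`.
In the ratio of ratios the exposure factors cancel exactly under the no-relative-effect assumption.
-/

lemma div_div_div_of_mul_eq {K : Type*} [Field K] {q₁₁ q₀₁ q₁₂ q₀₂ e₁₁ e₀₁ e₁₂ e₀₂ : K}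
    (h : e₁₁ * e₀₂ = e₀₁ * e₁₂) (h₀₁ : e₀₁ ≠ 0) (h₁₂ : e₁₂ ≠ 0) :
    q₁₁ * e₁₁ / (q₀₁ * e₀₁) / (q₁₂ * e₁₂ / (q₀₂ * e₀₂)) = q₁₁ / q₀₁ / (q₁₂ / q₀₂) := by
  have h₀₂ : e₀₂ ≠ 0 := by
    rintro rfl
    exact mul_ne_zero h₀₁ h₁₂ (by simpa using h.symm)
  have hr : e₁₁ / e₀₁ = e₁₂ / e₀₂ := (div_eq_div_iff h₀₁ h₀₂).2 (by linear_combination h)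
  rw [mul_div_mul_comm, mul_div_mul_comm q₁₂, hr,
    mul_div_mul_right _ _ (div_ne_zero h₁₂ h₀₂)]

namespace ProbabilityTheory

variable {Ω : Type*} [MeasurableSpace Ω] {P : Measure Ω} {B B' C D : Set Ω}

lemma cprR_congr (h : (B ∩ C : Set Ω) =ᵐ[P] (B' ∩ C : Set Ω)) : cprR P B C = cprR P B' C := by
  rw [cprR, cprR, measure_congr h]

lemma cprR_inter_eq_mul (h : P (B ∩ D ∩ C) * P C = P (B ∩ C) * P (D ∩ C)) :
    cprR P (B ∩ D) C = cprR P B C * cprR P D C := by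
  have h' := congrArg ENNReal.toReal h
  rw [ENNReal.toReal_mul, ENNReal.toReal_mul] at h'
  rcases eq_or_ne (P C).toReal 0 with hC | hC
  · simp [cprR, hC]
  · rw [cprR, cprR, cprR, div_mul_div_comm, eq_div_iff (mul_ne_zero hC hC), ← h']
    field_simp

lemma cprR_inter_right_eq (h : P (B ∩ D ∩ C) * P C = P (B ∩ C) * P (D ∩ C))
    (hDC : (P (D ∩ C)).toReal ≠ 0) (hC : (P C).toReal ≠ 0) :
    cprR P B (D ∩ C) = cprR P B C := by
  have h' := congrArg ENNReal.toReal h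
  rw [ENNReal.toReal_mul, ENNReal.toReal_mul, Set.inter_assoc] at h'
  rw [cprR, cprR, div_eq_div_iff hDC hC, h']

lemma toReal_measure_inter_pos_of_cprR_pos (h : 0 < cprR P B C) : 0 < (P (B ∩ C)).toReal :=
  (div_pos_iff.mp h).elim (·.1) fun h ↦ absurd h.1 ENNReal.toReal_nonneg.not_gt

section Exposure

variable {α : Type*} {A : Ω → α} {a : α} {E Y Eₐ Yₐₑ : Ω → Fin 3} {e : Fin 3}

lemma ae_exposure_eq_of_outcome_eq (fnec : ∀ᵐ ω ∂P, E ω = 0 → Y ω = 0)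
    (fnocross : ∀ᵐ ω ∂P, (E ω = 1 → Y ω ≠ 2) ∧ (E ω = 2 → Y ω ≠ 1)) (he : e = 1 ∨ e = 2) :
    ∀ᵐ ω ∂P, Y ω = e → E ω = e := by
  filter_upwards [fnec, fnocross] with ω hnec hcross hY
  generalize E ω = x at hnec hcross
  rcases he with rfl | rfl <;> fin_cases x <;> simp_all

lemma ae_potential_exposure_eq_inter (hEₐ : ∀ᵐ ω ∂P, A ω = a → Eₐ ω = E ω) :
    ({ω | Eₐ ω = e} ∩ ({ω | A ω = a} ∩ D) : Set Ω)
      =ᵐ[P] ({ω | A ω = a} ∩ {ω | E ω = e} ∩ D : Set Ω) := by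
  rw [Filter.eventuallyEq_set]
  filter_upwards [hEₐ] with ω hω
  simp only [Set.mem_inter_iff, Set.mem_ofPred_eq]
  constructor
  · rintro ⟨hea, ha, hD⟩
    exact ⟨⟨ha, hω ha ▸ hea⟩, hD⟩
  · rintro ⟨⟨ha, hEe⟩, hD⟩
    exact ⟨(hω ha).trans hEe, ha, hD⟩

lemma ae_outcome_eq_inter (hEₐ : ∀ᵐ ω ∂P, A ω = a → Eₐ ω = E ω)
    (hYₐₑ : ∀ᵐ ω ∂P, A ω = a → E ω = e → Yₐₑ ω = Y ω) (hYE : ∀ᵐ ω ∂P, Y ω = e → E ω = e) :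
    ({ω | Y ω = e} ∩ ({ω | A ω = a} ∩ D) : Set Ω)
      =ᵐ[P] ({ω | Yₐₑ ω = e} ∩ {ω | Eₐ ω = e} ∩ ({ω | A ω = a} ∩ D) : Set Ω) := by
  rw [Filter.eventuallyEq_set]
  filter_upwards [hEₐ, hYₐₑ, hYE] with ω hcE hcY hYE
  simp only [Set.mem_inter_iff, Set.mem_ofPred_eq]
  constructor
  · rintro ⟨hy, ha, hD⟩
    have hEe := hYE hy
    exact ⟨⟨(hcY ha hEe).trans hy, (hcE ha).trans hEe⟩, ha, hD⟩
  · rintro ⟨⟨hy, hea⟩, ha, hD⟩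
    exact ⟨(hcY ha ((hcE ha).symm.trans hea)) ▸ hy, ha, hD⟩

lemma cprR_outcome_eq_mul (hEₐ : ∀ᵐ ω ∂P, A ω = a → Eₐ ω = E ω)
    (hYₐₑ : ∀ᵐ ω ∂P, A ω = a → E ω = e → Yₐₑ ω = Y ω) (hYE : ∀ᵐ ω ∂P, Y ω = e → E ω = e)
    (exchY : P ({ω | Yₐₑ ω = e} ∩ {ω | A ω = a} ∩ D) * P D
      = P ({ω | Yₐₑ ω = e} ∩ D) * P ({ω | A ω = a} ∩ D))
    (exchE : P ({ω | Eₐ ω = e} ∩ {ω | A ω = a} ∩ D) * P D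
      = P ({ω | Eₐ ω = e} ∩ D) * P ({ω | A ω = a} ∩ D))
    (exchYE : P ({ω | Yₐₑ ω = e} ∩ {ω | Eₐ ω = e} ∩ ({ω | A ω = a} ∩ D)) * P ({ω | A ω = a} ∩ D)
      = P ({ω | Yₐₑ ω = e} ∩ ({ω | A ω = a} ∩ D)) * P ({ω | Eₐ ω = e} ∩ ({ω | A ω = a} ∩ D)))
    (hAD : (P ({ω | A ω = a} ∩ D)).toReal ≠ 0) (hD : (P D).toReal ≠ 0) :
    cprR P {ω | Y ω = e} ({ω | A ω = a} ∩ D) = cprR P {ω | Yₐₑ ω = e} D * cprR P {ω | Eₐ ω = e} D :=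
  calc cprR P {ω | Y ω = e} ({ω | A ω = a} ∩ D)
      = cprR P ({ω | Yₐₑ ω = e} ∩ {ω | Eₐ ω = e}) ({ω | A ω = a} ∩ D) :=
        cprR_congr (ae_outcome_eq_inter hEₐ hYₐₑ hYE)
    _ = cprR P {ω | Yₐₑ ω = e} ({ω | A ω = a} ∩ D) * cprR P {ω | Eₐ ω = e} ({ω | A ω = a} ∩ D) :=
        cprR_inter_eq_mul exchYE
    _ = cprR P {ω | Yₐₑ ω = e} D * cprR P {ω | Eₐ ω = e} D := by
        rw [cprR_inter_right_eq exchY hAD hD, cprR_inter_right_eq exchE hAD hD]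

lemma cprR_potential_exposure_pos [IsFiniteMeasure P] (hEₐ : ∀ᵐ ω ∂P, A ω = a → Eₐ ω = E ω)
    (exchE : P ({ω | Eₐ ω = e} ∩ {ω | A ω = a} ∩ D) * P D
      = P ({ω | Eₐ ω = e} ∩ D) * P ({ω | A ω = a} ∩ D))
    (hpos : 0 < cprR P ({ω | A ω = a} ∩ {ω | E ω = e}) D) (hD : (P D).toReal ≠ 0) :
    0 < cprR P {ω | Eₐ ω = e} D := by
  have hnum := toReal_measure_inter_pos_of_cprR_pos hpos
  have hAD : 0 < (P ({ω | A ω = a} ∩ D)).toReal :=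
    hnum.trans_le (measureReal_mono (Set.inter_subset_inter_left _ Set.inter_subset_left))
  rw [← cprR_inter_right_eq exchE hAD.ne' hD, cprR,
    measure_congr (ae_potential_exposure_eq_inter hEₐ)]
  exact div_pos hnum hAD

end Exposure

end ProbabilityTheory

open ProbabilityTheory in
theorem stmt6_general
    {Ω 𝓛 : Type*} [MeasurableSpace Ω]
    (P : Measure Ω) [IsProbabilityMeasure P]
    (A : Ω → Fin 2) (E Y : Ω → Fin 3) (L : Ω → 𝓛)
    (Ea : Fin 2 → Ω → Fin 3) (Yae : Fin 2 → Fin 3 → Ω → Fin 3)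
    -- factual exposure necessity
    (fnec : ∀ᵐ ω ∂P, E ω = 0 → Y ω = 0)
    -- factual no cross-infectivity
    (fnocross : ∀ᵐ ω ∂P, (E ω = 1 → Y ω ≠ 2) ∧ (E ω = 2 → Y ω ≠ 1))
    -- generalized exposure exchangeability: E^a ⫫ A | L
    (exchE : ∀ (a : Fin 2) (l : 𝓛) (e : Fin 3) (t : Fin 2),
      P ({ω | Ea a ω = e} ∩ {ω | A ω = t} ∩ {ω | L ω = l}) * P {ω | L ω = l}
        = P ({ω | Ea a ω = e} ∩ {ω | L ω = l}) * P ({ω | A ω = t} ∩ {ω | L ω = l}))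
    -- generalized exposure exchangeability: Y^{a,e} ⫫ A | L, e ∈ {1,2}
    (exchY : ∀ (a : Fin 2) (l : 𝓛) (e : Fin 3), e = 1 ∨ e = 2 → ∀ (y : Fin 3) (t : Fin 2),
      P ({ω | Yae a e ω = y} ∩ {ω | A ω = t} ∩ {ω | L ω = l}) * P {ω | L ω = l}
        = P ({ω | Yae a e ω = y} ∩ {ω | L ω = l}) * P ({ω | A ω = t} ∩ {ω | L ω = l}))
    -- generalized exposure exchangeability: Y^{a,e} ⫫ E^a | A = a, L
    (exchYE : ∀ (a : Fin 2) (l : 𝓛) (e : Fin 3), e = 1 ∨ e = 2 → ∀ (y e' : Fin 3),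
      P ({ω | Yae a e ω = y} ∩ {ω | Ea a ω = e'} ∩ ({ω | A ω = a} ∩ {ω | L ω = l}))
          * P ({ω | A ω = a} ∩ {ω | L ω = l})
        = P ({ω | Yae a e ω = y} ∩ ({ω | A ω = a} ∩ {ω | L ω = l}))
          * P ({ω | Ea a ω = e'} ∩ ({ω | A ω = a} ∩ {ω | L ω = l})))
    -- generalized exposure consistency
    (consE : ∀ᵐ ω ∂P, ∀ a : Fin 2, A ω = a → Ea a ω = E ω)
    (consY : ∀ (a : Fin 2) (e : Fin 3), e = 1 ∨ e = 2 →
      ∀ᵐ ω ∂P, A ω = a → E ω = e → Yae a e ω = Y ω)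
    -- generalized exposure positivity
    (posL : ∀ l : 𝓛, 0 < prR P {ω | L ω = l})
    (posAE : ∀ (a : Fin 2) (l : 𝓛) (e : Fin 3), e = 1 ∨ e = 2 →
      0 < cprR P ({ω | A ω = a} ∩ {ω | E ω = e}) {ω | L ω = l})
    -- conditional no relative effect on exposure
    (ratioexp : ∀ l : 𝓛,
      cprR P {ω | Ea 1 ω = 1} {ω | L ω = l} * cprR P {ω | Ea 0 ω = 2} {ω | L ω = l}
        = cprR P {ω | Ea 0 ω = 1} {ω | L ω = l} * cprR P {ω | Ea 1 ω = 2} {ω | L ω = l})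
    (l : 𝓛) :
    (cprR P {ω | Yae 1 1 ω = 1} {ω | L ω = l} / cprR P {ω | Yae 0 1 ω = 1} {ω | L ω = l})
        / (cprR P {ω | Yae 1 2 ω = 2} {ω | L ω = l}
          / cprR P {ω | Yae 0 2 ω = 2} {ω | L ω = l})
      = (cprR P {ω | Y ω = 1} ({ω | A ω = 1} ∩ {ω | L ω = l})
          / cprR P {ω | Y ω = 1} ({ω | A ω = 0} ∩ {ω | L ω = l}))
        / (cprR P {ω | Y ω = 2} ({ω | A ω = 1} ∩ {ω | L ω = l})
          / cprR P {ω | Y ω = 2} ({ω | A ω = 0} ∩ {ω | L ω = l})) := by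
  have hLl : (P {ω | L ω = l}).toReal ≠ 0 := (posL l).ne'
  have hAL (a : Fin 2) : (P ({ω | A ω = a} ∩ {ω | L ω = l})).toReal ≠ 0 :=
    ((toReal_measure_inter_pos_of_cprR_pos (posAE a l 1 (Or.inl rfl))).trans_le
      (measureReal_mono (Set.inter_subset_inter_left _ Set.inter_subset_left))).ne'
  have hcE (a : Fin 2) : ∀ᵐ ω ∂P, A ω = a → Ea a ω = E ω := consE.mono fun _ h ↦ h a
  have key (a : Fin 2) (e : Fin 3) (he : e = 1 ∨ e = 2) :
      cprR P {ω | Y ω = e} ({ω | A ω = a} ∩ {ω | L ω = l})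
        = cprR P {ω | Yae a e ω = e} {ω | L ω = l} * cprR P {ω | Ea a ω = e} {ω | L ω = l} :=
    cprR_outcome_eq_mul (hcE a) (consY a e he) (ae_exposure_eq_of_outcome_eq fnec fnocross he)
      (exchY a l e he e a) (exchE a l e a) (exchYE a l e he e e) (hAL a) hLl
  have hEpos (a : Fin 2) (e : Fin 3) (he : e = 1 ∨ e = 2) :
      0 < cprR P {ω | Ea a ω = e} {ω | L ω = l} :=
    cprR_potential_exposure_pos (hcE a) (exchE a l e a) (posAE a l e he) hLl
  rw [key 1 1 (Or.inl rfl), key 0 1 (Or.inl rfl), key 1 2 (Or.inr rfl), key 0 2 (Or.inr rfl)]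
  exact (div_div_div_of_mul_eq (ratioexp l) (hEpos 0 1 (Or.inl rfl)).ne'
    (hEpos 1 2 (Or.inr rfl)).ne').symm

/-- identification of the effect with intervened exposure (EIE)
conditional on `L`, under the factual assumptions, exposure
exchangeability/consistency/positivity for both arms, and the conditional
no-relative-effect-on-exposure assumption. -/
theorem stmt6
    {Ω 𝓛 : Type*} [MeasurableSpace Ω] [MeasurableSpace 𝓛] [Fintype 𝓛]
    (P : Measure Ω) [IsProbabilityMeasure P]
    (A : Ω → Fin 2) (E Y : Ω → Fin 3) (L : Ω → 𝓛)
    (Ea : Fin 2 → Ω → Fin 3) (Yae : Fin 2 → Fin 3 → Ω → Fin 3)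
    (hA : Measurable A) (hE : Measurable E) (hY : Measurable Y) (hL : Measurable L)
    (hEa : ∀ a, Measurable (Ea a)) (hYae : ∀ a e, Measurable (Yae a e))
    -- factual exposure necessity
    (fnec : ∀ᵐ ω ∂P, E ω = 0 → Y ω = 0)
    -- factual no cross-infectivity
    (fnocross : ∀ᵐ ω ∂P, (E ω = 1 → Y ω ≠ 2) ∧ (E ω = 2 → Y ω ≠ 1))
    -- generalized exposure exchangeability: E^a ⫫ A | L
    (exchE : ∀ (a : Fin 2) (l : 𝓛) (e : Fin 3) (t : Fin 2),
      P ({ω | Ea a ω = e} ∩ {ω | A ω = t} ∩ {ω | L ω = l}) * P {ω | L ω = l}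
        = P ({ω | Ea a ω = e} ∩ {ω | L ω = l}) * P ({ω | A ω = t} ∩ {ω | L ω = l}))
    -- generalized exposure exchangeability: Y^{a,e} ⫫ A | L, e ∈ {1,2}
    (exchY : ∀ (a : Fin 2) (l : 𝓛) (e : Fin 3), e = 1 ∨ e = 2 → ∀ (y : Fin 3) (t : Fin 2),
      P ({ω | Yae a e ω = y} ∩ {ω | A ω = t} ∩ {ω | L ω = l}) * P {ω | L ω = l}
        = P ({ω | Yae a e ω = y} ∩ {ω | L ω = l}) * P ({ω | A ω = t} ∩ {ω | L ω = l}))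
    -- generalized exposure exchangeability: Y^{a,e} ⫫ E^a | A = a, L
    (exchYE : ∀ (a : Fin 2) (l : 𝓛) (e : Fin 3), e = 1 ∨ e = 2 → ∀ (y e' : Fin 3),
      P ({ω | Yae a e ω = y} ∩ {ω | Ea a ω = e'} ∩ ({ω | A ω = a} ∩ {ω | L ω = l}))
          * P ({ω | A ω = a} ∩ {ω | L ω = l})
        = P ({ω | Yae a e ω = y} ∩ ({ω | A ω = a} ∩ {ω | L ω = l}))
          * P ({ω | Ea a ω = e'} ∩ ({ω | A ω = a} ∩ {ω | L ω = l})))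
    -- generalized exposure consistency
    (consE : ∀ᵐ ω ∂P, ∀ a : Fin 2, A ω = a → Ea a ω = E ω)
    (consY : ∀ (a : Fin 2) (e : Fin 3), e = 1 ∨ e = 2 →
      ∀ᵐ ω ∂P, A ω = a → E ω = e → Yae a e ω = Y ω)
    -- generalized exposure positivity
    (posL : ∀ l : 𝓛, 0 < prR P {ω | L ω = l})
    (posAE : ∀ (a : Fin 2) (l : 𝓛) (e : Fin 3), e = 1 ∨ e = 2 →
      0 < cprR P ({ω | A ω = a} ∩ {ω | E ω = e}) {ω | L ω = l})
    -- conditional no relative effect on exposure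
    (ratioexp : ∀ l : 𝓛,
      cprR P {ω | Ea 1 ω = 1} {ω | L ω = l} * cprR P {ω | Ea 0 ω = 2} {ω | L ω = l}
        = cprR P {ω | Ea 0 ω = 1} {ω | L ω = l} * cprR P {ω | Ea 1 ω = 2} {ω | L ω = l})
    (l : 𝓛)
    -- all denominators are nonzero
    (d1 : cprR P {ω | Yae 0 1 ω = 1} {ω | L ω = l} ≠ 0)
    (d2 : cprR P {ω | Yae 0 2 ω = 2} {ω | L ω = l} ≠ 0)
    (d3 : cprR P {ω | Yae 1 2 ω = 2} {ω | L ω = l} ≠ 0)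
    (d4 : cprR P {ω | Y ω = 1} ({ω | A ω = 0} ∩ {ω | L ω = l}) ≠ 0)
    (d5 : cprR P {ω | Y ω = 2} ({ω | A ω = 0} ∩ {ω | L ω = l}) ≠ 0)
    (d6 : cprR P {ω | Y ω = 2} ({ω | A ω = 1} ∩ {ω | L ω = l}) ≠ 0) :
    (cprR P {ω | Yae 1 1 ω = 1} {ω | L ω = l} / cprR P {ω | Yae 0 1 ω = 1} {ω | L ω = l})
        / (cprR P {ω | Yae 1 2 ω = 2} {ω | L ω = l}
          / cprR P {ω | Yae 0 2 ω = 2} {ω | L ω = l})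
      = (cprR P {ω | Y ω = 1} ({ω | A ω = 1} ∩ {ω | L ω = l})
          / cprR P {ω | Y ω = 1} ({ω | A ω = 0} ∩ {ω | L ω = l}))
        / (cprR P {ω | Y ω = 2} ({ω | A ω = 1} ∩ {ω | L ω = l})
          / cprR P {ω | Y ω = 2} ({ω | A ω = 0} ∩ {ω | L ω = l})) :=
  stmt6_general P A E Y L Ea Yae fnec fnocross exchE exchY exchYE consE consY posL posAE ratioexp l
end

section
/- Under independent censoring, censoring exchangeability, censoring positivity, censoring consistency, no effect on exposure under censoring, exposure necessity under censoring and no cross-infectivity under censoring, and provided all conditioning events have positive probability and all denominators are nonzero, the contrast conditional on specific exposure among the uncensored is identified from the uncensored observed data: [P(Y^{1,c=0} = 1 | E^{1,c=0} = 1)/P(Y^{0,c=0} = 1 | E^{0,c=0} = 1)] / [P(Y^{1,c=0} = 2 | E^{1,c=0} = 2)/P(Y^{0,c=0} = 2 | E^{0,c=0} = 2)] = [P(Y = 1 | A = 1, C = 0)/P(Y = 1 | A = 0, C = 0)] / [P(Y = 2 | A = 1, C = 0)/P(Y = 2 | A = 0, C = 0)]. -/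
open MeasureTheory

/-- identification of the contrast conditional on specific exposure among
the uncensored from the uncensored observed data, under independent censoring, censoring
exchangeability, censoring positivity, censoring consistency, no effect on exposure under
censoring, exposure necessity under censoring, and no cross-infectivity under censoring. -/
theorem stmt13
    {Ω : Type*} [MeasurableSpace Ω] (P : Measure Ω) [IsProbabilityMeasure P]
    (A C : Ω → Fin 2) (E Y : Ω → Fin 3)
    (Ec Yc : Fin 2 → Ω → Fin 3)  -- E^{a,c=0} and Y^{a,c=0}
    (hA : Measurable A) (hC : Measurable C) (hE : Measurable E) (hY : Measurable Y)
    (hEc : ∀ a, Measurable (Ec a)) (hYc : ∀ a, Measurable (Yc a))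
    -- censoring exchangeability: (Y^{a,c=0}, E^{a,c=0}) ⫫ A
    (exch : ∀ (a : Fin 2) (y e : Fin 3) (t : Fin 2),
      P ({ω | Yc a ω = y} ∩ {ω | Ec a ω = e} ∩ {ω | A ω = t})
        = P ({ω | Yc a ω = y} ∩ {ω | Ec a ω = e}) * P {ω | A ω = t})
    -- independent censoring: (Y^{a,c=0}, E^{a,c=0}) ⫫ C | A = a
    (indcens : ∀ (a : Fin 2) (y e : Fin 3) (c : Fin 2),
      P ({ω | Yc a ω = y} ∩ {ω | Ec a ω = e} ∩ {ω | C ω = c} ∩ {ω | A ω = a})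
          * P {ω | A ω = a}
        = P ({ω | Yc a ω = y} ∩ {ω | Ec a ω = e} ∩ {ω | A ω = a})
          * P ({ω | C ω = c} ∩ {ω | A ω = a}))
    -- censoring positivity
    (pos : ∀ a : Fin 2, 0 < prR P ({ω | A ω = a} ∩ {ω | C ω = 0}))
    -- censoring consistency
    (cons : ∀ a : Fin 2, ∀ᵐ ω ∂P, A ω = a → C ω = 0 → Ec a ω = E ω ∧ Yc a ω = Y ω)
    -- no effect on exposure under censoring
    (noexp : ∀ᵐ ω ∂P, Ec 1 ω = Ec 0 ω)
    -- exposure necessity under censoring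
    (expnec : ∀ a : Fin 2, ∀ᵐ ω ∂P, Ec a ω = 0 → Yc a ω = 0)
    -- no cross-infectivity under censoring
    (nocross : ∀ a : Fin 2, ∀ᵐ ω ∂P, (Ec a ω = 1 → Yc a ω ≠ 2) ∧ (Ec a ω = 2 → Yc a ω ≠ 1))
    -- all conditioning events have positive probability
    (posE : ∀ (a : Fin 2) (j : Fin 3), j = 1 ∨ j = 2 → 0 < prR P {ω | Ec a ω = j})
    -- all denominators are nonzero
    (d1 : cprR P {ω | Yc 0 ω = 1} {ω | Ec 0 ω = 1} ≠ 0)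
    (d2 : cprR P {ω | Yc 0 ω = 2} {ω | Ec 0 ω = 2} ≠ 0)
    (d3 : cprR P {ω | Yc 1 ω = 2} {ω | Ec 1 ω = 2} ≠ 0)
    (d4 : cprR P {ω | Y ω = 1} ({ω | A ω = 0} ∩ {ω | C ω = 0}) ≠ 0)
    (d5 : cprR P {ω | Y ω = 2} ({ω | A ω = 0} ∩ {ω | C ω = 0}) ≠ 0)
    (d6 : cprR P {ω | Y ω = 2} ({ω | A ω = 1} ∩ {ω | C ω = 0}) ≠ 0) :
    (cprR P {ω | Yc 1 ω = 1} {ω | Ec 1 ω = 1} / cprR P {ω | Yc 0 ω = 1} {ω | Ec 0 ω = 1})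
        / (cprR P {ω | Yc 1 ω = 2} {ω | Ec 1 ω = 2}
          / cprR P {ω | Yc 0 ω = 2} {ω | Ec 0 ω = 2})
      = (cprR P {ω | Y ω = 1} ({ω | A ω = 1} ∩ {ω | C ω = 0})
          / cprR P {ω | Y ω = 1} ({ω | A ω = 0} ∩ {ω | C ω = 0}))
        / (cprR P {ω | Y ω = 2} ({ω | A ω = 1} ∩ {ω | C ω = 0})
          / cprR P {ω | Y ω = 2} ({ω | A ω = 0} ∩ {ω | C ω = 0})) := by

  classical
  -- P(A = a) ≠ 0
  have hposA : ∀ a : Fin 2, P ({ω | A ω = a} ∩ {ω | C ω = 0}) ≠ 0 := by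
    intro a
    have h := pos a
    intro h0
    rw [prR, h0] at h
    simp at h
  have hAnz : ∀ a : Fin 2, P {ω | A ω = a} ≠ 0 := by
    intro a hz
    exact hposA a (measure_mono_null Set.inter_subset_left hz)
  -- a.e., Yc a = j → Ec a = j for j ∈ {1,2}
  have hYE : ∀ (a : Fin 2) (j : Fin 3), j = 1 ∨ j = 2 →
      ∀ᵐ ω ∂P, Yc a ω = j → Ec a ω = j := by
    intro a j hj
    filter_upwards [expnec a, nocross a] with ω h1 h2 hy
    obtain ⟨h21, h22⟩ := h2
    have h3 : Ec a ω = 0 ∨ Ec a ω = 1 ∨ Ec a ω = 2 := by omega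
    rcases hj with rfl | rfl
    · rcases h3 with h | h | h
      · have := h1 h; omega
      · exact h
      · have := h22 h; omega
    · rcases h3 with h | h | h
      · have := h1 h; omega
      · have := h21 h; omega
      · exact h
  -- event rewriting via consistency
  have ev : ∀ (a : Fin 2) (j : Fin 3), j = 1 ∨ j = 2 →
      P ({ω | Y ω = j} ∩ ({ω | A ω = a} ∩ {ω | C ω = 0}))
        = P ({ω | Yc a ω = j} ∩ {ω | Ec a ω = j} ∩ {ω | C ω = (0 : Fin 2)} ∩ {ω | A ω = a}) := by
    intro a j hj
    apply measure_congr
    rw [Filter.eventuallyEq_set]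
    filter_upwards [cons a, hYE a j hj] with ω hc hye
    simp only [Set.mem_inter_iff, Set.mem_setOf_eq]
    constructor
    · rintro ⟨hy, ha, h0⟩
      obtain ⟨hEeq, hYeq⟩ := hc ha h0
      have hyc : Yc a ω = j := hYeq.trans hy
      exact ⟨⟨⟨hyc, hye hyc⟩, h0⟩, ha⟩
    · rintro ⟨⟨⟨hyc, _⟩, h0⟩, ha⟩
      obtain ⟨hEeq, hYeq⟩ := hc ha h0
      exact ⟨hYeq.symm.trans hyc, ha, h0⟩
  -- key identification at the level of prR
  have key : ∀ (a : Fin 2) (j : Fin 3), j = 1 ∨ j = 2 →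
      cprR P {ω | Y ω = j} ({ω | A ω = a} ∩ {ω | C ω = 0})
        = prR P ({ω | Yc a ω = j} ∩ {ω | Ec a ω = j}) := by
    intro a j hj
    have h1 := indcens a j j 0
    rw [exch a j j a] at h1
    -- take toReal
    have h2 := congrArg ENNReal.toReal h1
    rw [ENNReal.toReal_mul, ENNReal.toReal_mul, ENNReal.toReal_mul] at h2
    have hAr : (P {ω | A ω = a}).toReal ≠ 0 :=
      ENNReal.toReal_ne_zero.mpr ⟨hAnz a, measure_ne_top P _⟩
    have h3 : (P ({ω | Yc a ω = j} ∩ {ω | Ec a ω = j} ∩ {ω | C ω = (0 : Fin 2)} ∩ {ω | A ω = a})).toReal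
        = (P ({ω | Yc a ω = j} ∩ {ω | Ec a ω = j})).toReal
          * (P ({ω | C ω = (0 : Fin 2)} ∩ {ω | A ω = a})).toReal := by
      have h2' : (P ({ω | Yc a ω = j} ∩ {ω | Ec a ω = j} ∩ {ω | C ω = (0 : Fin 2)} ∩ {ω | A ω = a})).toReal
          * (P {ω | A ω = a}).toReal
          = (P ({ω | Yc a ω = j} ∩ {ω | Ec a ω = j})).toReal
            * (P ({ω | C ω = (0 : Fin 2)} ∩ {ω | A ω = a})).toReal * (P {ω | A ω = a}).toReal := by
        rw [h2]; ring
      exact mul_right_cancel₀ hAr h2'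
    rw [cprR, ev a j hj, h3, Set.inter_comm {ω | C ω = (0 : Fin 2)} {ω | A ω = a}]
    have hdz : (P ({ω | A ω = a} ∩ {ω | C ω = (0 : Fin 2)})).toReal ≠ 0 :=
      ENNReal.toReal_ne_zero.mpr ⟨hposA a, measure_ne_top P _⟩
    rw [prR, mul_div_assoc, div_self hdz, mul_one]
  -- exposure marginals coincide for a = 0, 1
  have hEeq : ∀ j : Fin 3, P {ω | Ec 1 ω = j} = P {ω | Ec 0 ω = j} := by
    intro j
    apply measure_congr
    rw [Filter.eventuallyEq_set]
    filter_upwards [noexp] with ω h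
    simp [Set.mem_setOf_eq, h]
  -- abbreviations
  set p11 := prR P ({ω | Yc 1 ω = 1} ∩ {ω | Ec 1 ω = 1}) with hp11
  set p01 := prR P ({ω | Yc 0 ω = 1} ∩ {ω | Ec 0 ω = 1}) with hp01
  set p12 := prR P ({ω | Yc 1 ω = 2} ∩ {ω | Ec 1 ω = 2}) with hp12
  set p02 := prR P ({ω | Yc 0 ω = 2} ∩ {ω | Ec 0 ω = 2}) with hp02
  have hq1 : (P {ω | Ec 1 ω = (1 : Fin 3)}).toReal = (P {ω | Ec 0 ω = (1 : Fin 3)}).toReal := by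
    rw [hEeq 1]
  have hq2 : (P {ω | Ec 1 ω = (2 : Fin 3)}).toReal = (P {ω | Ec 0 ω = (2 : Fin 3)}).toReal := by
    rw [hEeq 2]
  have hq1nz : (P {ω | Ec 0 ω = (1 : Fin 3)}).toReal ≠ 0 := ne_of_gt (posE 0 1 (Or.inl rfl))
  have hq2nz : (P {ω | Ec 0 ω = (2 : Fin 3)}).toReal ≠ 0 := ne_of_gt (posE 0 2 (Or.inr rfl))
  have hcpr : ∀ (a : Fin 2) (j : Fin 3),
      cprR P {ω | Yc a ω = j} {ω | Ec a ω = j}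
        = prR P ({ω | Yc a ω = j} ∩ {ω | Ec a ω = j}) / (P {ω | Ec a ω = j}).toReal := by
    intro a j; rfl
  have hd1 : p01 ≠ 0 := by
    intro h
    apply d1
    rw [hcpr, ← hp01, h, zero_div]
  have hd2 : p02 ≠ 0 := by
    intro h
    apply d2
    rw [hcpr, ← hp02, h, zero_div]
  have hd3 : p12 ≠ 0 := by
    intro h
    apply d3
    rw [hcpr, ← hp12, h, zero_div]
  rw [key 1 1 (Or.inl rfl), key 0 1 (Or.inl rfl), key 1 2 (Or.inr rfl), key 0 2 (Or.inr rfl),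
    hcpr, hcpr, hcpr, hcpr, hq1, hq2, ← hp11, ← hp01, ← hp12, ← hp02]
  field_simp
end

section
/- Under the exchangeability, positivity, consistency and exposure necessity assumptions of the time-to-event CCE setup, and provided P(E_k^a ≠ 0) > 0 for a ∈ {0,1} and all denominators are nonzero, for every k ∈ {1,…,K} the time-to-event contrast conditional on exposure is identified from observed cumulative incidences: [P(Y_k^1 = 1 | E_k^1 ≠ 0)/P(Y_k^0 = 1 | E_k^0 ≠ 0)] · [P(Y_k^1 = 2 | E_k^1 ≠ 0)/P(Y_k^0 = 2 | E_k^0 ≠ 0)]^{-1} = [μ_k^1(1)/μ_k^1(0)] · [μ_k^2(1)/μ_k^2(0)]^{-1}. -/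
open MeasureTheory

/-- Observed discrete cause-`j` hazard
`h_k^j(a) = P(Y_k = j, Y_{k-1} = 0 | A = a) / P(Y_{k-1} = 0 | A = a)`. -/
noncomputable def haz {Ω : Type*} [MeasurableSpace Ω] (P : Measure Ω)
    (Y : ℕ → Ω → Fin 3) (A : Ω → Fin 2) (j : Fin 3) (a : Fin 2) (k : ℕ) : ℝ :=
  cprR P ({ω | Y k ω = j} ∩ {ω | Y (k - 1) ω = 0}) {ω | A ω = a}
    / cprR P {ω | Y (k - 1) ω = 0} {ω | A ω = a}

/-- Survival hazard `h_k^0(a)` with the convention `h_0^0(a) = 1`. -/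
noncomputable def haz0 {Ω : Type*} [MeasurableSpace Ω] (P : Measure Ω)
    (Y : ℕ → Ω → Fin 3) (A : Ω → Fin 2) (a : Fin 2) (k : ℕ) : ℝ :=
  if k = 0 then 1 else haz P Y A 0 a k

/-- Observed cumulative incidence `μ_k^j(a) = Σ_{i=1}^k h_i^j(a) · Π_{l=0}^{i-1} h_l^0(a)`. -/
noncomputable def cuminc {Ω : Type*} [MeasurableSpace Ω] (P : Measure Ω)
    (Y : ℕ → Ω → Fin 3) (A : Ω → Fin 2) (j : Fin 3) (a : Fin 2) (k : ℕ) : ℝ :=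
  ∑ i ∈ Finset.Icc 1 k, haz P Y A j a i * ∏ l ∈ Finset.range i, haz0 P Y A a l

/-!
The observed cumulative incidence telescopes: the product of the survival hazards up to `i - 1`
is the survival probability `P(Y_{i-1} = 0 | A = a)`, so `μ_k^j(a)` adds up the probabilities
that the first infection happens at time `i` with variant `j`, which is `P(Y_k = j | A = a)`.
Consistency turns this into `P(Y_k^a = j | A = a)` and exchangeability into `P(Y_k^a = j)`.
By exposure necessity `{Y_k^a = j}` lies a.s. inside `{E_k^a ≠ 0}`, so conditioning on exposure
only divides by `P(E_k^a ≠ 0)`, a factor shared by both variants that cancels in the contrast.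
-/

open Finset

section Absorbing

variable {Ω α : Type*} [Zero α] {Y : ℕ → Ω → α}

lemma eq_zero_of_succ_eq_zero (hY : ∀ k ω, Y k ω ≠ 0 → Y (k + 1) ω = Y k ω) {k : ℕ} {ω : Ω}
    (h : Y (k + 1) ω = 0) : Y k ω = 0 :=
  not_not.mp fun hk => hk ((hY k ω hk).symm.trans h)

lemma setOf_succ_eq_union (hY : ∀ k ω, Y k ω ≠ 0 → Y (k + 1) ω = Y k ω) {j : α} (hj : j ≠ 0)
    (k : ℕ) :
    {ω | Y (k + 1) ω = j} = {ω | Y k ω = j} ∪ ({ω | Y (k + 1) ω = j} ∩ {ω | Y k ω = 0}) := by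
  ext ω
  by_cases h : Y k ω = 0
  · simp [h, hj.symm]
  · simp [h, hY k ω h]

lemma disjoint_setOf_eq_inter_setOf_eq_zero {j : α} (hj : j ≠ 0) (k : ℕ) (B : Set Ω) :
    Disjoint {ω | Y k ω = j} (B ∩ {ω | Y k ω = 0}) :=
  Set.disjoint_left.mpr fun _ hj' h0 => hj (hj'.symm.trans h0.2)

end Absorbing

section ConditionalProbability

variable {Ω : Type*} [MeasurableSpace Ω] (P : Measure Ω)

lemma cprR_union [IsFiniteMeasure P] {B B' C : Set Ω} (hd : Disjoint B B')
    (hB' : MeasurableSet B') (hC : MeasurableSet C) :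
    cprR P (B ∪ B') C = cprR P B C + cprR P B' C := by
  rw [cprR, Set.union_inter_distrib_right,
    measure_union (hd.mono Set.inter_subset_left Set.inter_subset_left) (hB'.inter hC),
    ENNReal.toReal_add (measure_ne_top _ _) (measure_ne_top _ _), add_div, cprR, cprR]

lemma cprR_div_mul_cancel_of_subset [IsFiniteMeasure P] {B B' : Set Ω} (h : B ⊆ B')
    (C : Set Ω) : cprR P B C / cprR P B' C * cprR P B' C = cprR P B C := by
  refine div_mul_cancel_of_imp fun h0 => ?_
  rcases div_eq_zero_iff.mp h0 with hB' | hC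
  · have hle := ENNReal.toReal_mono (measure_ne_top P _)
      (measure_mono (Set.inter_subset_inter_left C h))
    rw [cprR, le_antisymm (hle.trans hB'.le) ENNReal.toReal_nonneg, zero_div]
  · rw [cprR, hC, div_zero]

lemma cprR_congr_ae {B B' C : Set Ω} (h : ∀ᵐ ω ∂P, ω ∈ C → (ω ∈ B ↔ ω ∈ B')) :
    cprR P B C = cprR P B' C := by
  have hBC : (B ∩ C : Set Ω) =ᵐ[P] (B' ∩ C : Set Ω) := by
    filter_upwards [h] with ω hω
    exact propext ⟨fun ⟨hB, hC⟩ => ⟨(hω hC).mp hB, hC⟩, fun ⟨hB', hC⟩ => ⟨(hω hC).mpr hB', hC⟩⟩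
  rw [cprR, cprR, measure_congr hBC]

lemma cprR_eq_prR_of_indep {B C : Set Ω} (h : P (B ∩ C) = P B * P C) (hC : prR P C ≠ 0) :
    cprR P B C = prR P B := by
  rw [prR] at hC
  rw [cprR, h, ENNReal.toReal_mul, mul_div_assoc, div_self hC, mul_one, prR]

lemma cprR_eq_div_of_ae_imp {B C : Set Ω} (h : ∀ᵐ ω ∂P, ω ∈ B → ω ∈ C) :
    cprR P B C = prR P B / prR P C := by
  have hBC : (B ∩ C : Set Ω) =ᵐ[P] B := by
    filter_upwards [h] with ω hω
    exact propext ⟨fun hB => hB.1, fun hB => ⟨hB, hω hB⟩⟩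
  rw [cprR, measure_congr hBC, prR, prR]

end ConditionalProbability

section Independence

variable {Ω β : Type*} [MeasurableSpace Ω] [MeasurableSpace β] [MeasurableSingletonClass β]
  [Countable β] {μ : Measure Ω}

lemma measure_preimage_inter_eq_mul {X : Ω → β} (hX : Measurable X) {C : Set Ω}
    (hC : MeasurableSet C) (h : ∀ b, μ (X ⁻¹' {b} ∩ C) = μ (X ⁻¹' {b}) * μ C) (T : Set β) :
    μ (X ⁻¹' T ∩ C) = μ (X ⁻¹' T) * μ C := by
  have hfib : ∀ b ∈ T, MeasurableSet (X ⁻¹' {b}) := fun b _ => hX (measurableSet_singleton b)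
  rw [← Measure.restrict_apply' hC, ← tsum_measure_preimage_singleton T.to_countable hfib,
    ← tsum_measure_preimage_singleton T.to_countable hfib, ← ENNReal.tsum_mul_right]
  simp only [Measure.restrict_apply' hC, h]

lemma measure_inter_eq_mul_of_history {Z : ℕ → Ω → β} (hZ : ∀ k, Measurable (Z k)) {C : Set Ω}
    (hC : MeasurableSet C) {K : ℕ}
    (h : ∀ ys : ℕ → β, μ ({ω | ∀ k, k ≤ K → Z k ω = ys k} ∩ C)
      = μ {ω | ∀ k, k ≤ K → Z k ω = ys k} * μ C)
    {k : ℕ} (hk : k ≤ K) (j : β) :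
    μ ({ω | Z k ω = j} ∩ C) = μ {ω | Z k ω = j} * μ C := by
  let X : Ω → Fin (K + 1) → β := fun ω i => Z i ω
  have hX : Measurable X := measurable_pi_lambda _ fun i => hZ i
  have hfib : ∀ b, X ⁻¹' {b} = {ω | ∀ k, k ≤ K → Z k ω = b ⟨min k K, by omega⟩} := by
    intro b
    ext ω
    simp only [Set.mem_preimage, Set.mem_singleton_iff, Set.mem_ofPred_eq, funext_iff, X]
    refine ⟨fun hω k hk => ?_, fun hω i => ?_⟩
    · simp only [min_eq_left hk, hω ⟨k, by omega⟩]
    · simp only [hω i (by omega), min_eq_left (Nat.le_of_lt_succ i.isLt)]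
  exact measure_preimage_inter_eq_mul hX hC (fun b => by rw [hfib]; exact h _)
    {b | b ⟨k, by omega⟩ = j}

end Independence

section CumulativeIncidence

variable {Ω : Type*} [MeasurableSpace Ω] {P : Measure Ω} [IsFiniteMeasure P]
  {A : Ω → Fin 2} {Y : ℕ → Ω → Fin 3}

lemma haz_succ_mul_cprR (j : Fin 3) (a : Fin 2) (k : ℕ) :
    haz P Y A j a (k + 1) * cprR P {ω | Y k ω = 0} {ω | A ω = a}
      = cprR P ({ω | Y (k + 1) ω = j} ∩ {ω | Y k ω = 0}) {ω | A ω = a} := by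
  rw [haz, Nat.add_sub_cancel]
  exact cprR_div_mul_cancel_of_subset P Set.inter_subset_right _

variable (Yzero : ∀ ω, Y 0 ω = 0) (Yabsorb : ∀ k ω, Y k ω ≠ 0 → Y (k + 1) ω = Y k ω)
include Yzero Yabsorb

lemma prod_haz0_eq_cprR {a : Fin 2} (ha : prR P {ω | A ω = a} ≠ 0) (k : ℕ) :
    ∏ l ∈ range (k + 1), haz0 P Y A a l = cprR P {ω | Y k ω = 0} {ω | A ω = a} := by
  induction k with
  | zero =>
    rw [prR] at ha
    simp [haz0, cprR, Yzero, div_self ha]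
  | succ k ih =>
    have hsurv : {ω | Y (k + 1) ω = 0} ∩ {ω | Y k ω = 0} = {ω | Y (k + 1) ω = 0} :=
      Set.inter_eq_left.mpr fun ω => eq_zero_of_succ_eq_zero Yabsorb
    rw [prod_range_succ, ih, haz0, if_neg k.succ_ne_zero, mul_comm, haz_succ_mul_cprR, hsurv]

lemma cuminc_eq_cprR (hA : Measurable A) (hY : ∀ k, Measurable (Y k)) {a : Fin 2}
    (ha : prR P {ω | A ω = a} ≠ 0) {j : Fin 3} (hj : j ≠ 0) (k : ℕ) :
    cuminc P Y A j a k = cprR P {ω | Y k ω = j} {ω | A ω = a} := by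
  induction k with
  | zero => simp [cuminc, cprR, Yzero, hj.symm]
  | succ k ih =>
    rw [cuminc, sum_Icc_succ_top (by omega), ← cuminc, ih, prod_haz0_eq_cprR Yzero Yabsorb ha,
      haz_succ_mul_cprR, ← cprR_union P (disjoint_setOf_eq_inter_setOf_eq_zero hj k _) ?_ ?_,
      ← setOf_succ_eq_union Yabsorb hj k]
    · exact (hY _ (measurableSet_singleton j)).inter (hY k (measurableSet_singleton 0))
    · exact hA (measurableSet_singleton a)

end CumulativeIncidence

section Identification

variable {Ω : Type*} [MeasurableSpace Ω] {P : Measure Ω} [IsProbabilityMeasure P] {K : ℕ}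
  {A : Ω → Fin 2} {Y Z : ℕ → Ω → Fin 3}

lemma cuminc_eq_prR_potential (hA : Measurable A) (hY : ∀ k, Measurable (Y k))
    (hZ : ∀ k, Measurable (Z k)) (Yzero : ∀ ω, Y 0 ω = 0)
    (Yabsorb : ∀ k ω, Y k ω ≠ 0 → Y (k + 1) ω = Y k ω) {a : Fin 2}
    (exch : ∀ ys : ℕ → Fin 3, P ({ω | ∀ k, k ≤ K → Z k ω = ys k} ∩ {ω | A ω = a})
      = P {ω | ∀ k, k ≤ K → Z k ω = ys k} * P {ω | A ω = a})
    (posA : 0 < prR P {ω | A ω = a})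
    (cons : ∀ᵐ ω ∂P, A ω = a → ∀ k, k ≤ K → Z k ω = Y k ω)
    {k : ℕ} (hkK : k ≤ K) {j : Fin 3} (hj : j ≠ 0) :
    cuminc P Y A j a k = prR P {ω | Z k ω = j} := by
  have hcons : ∀ᵐ ω ∂P, ω ∈ {ω | A ω = a} → (Y k ω = j ↔ Z k ω = j) := by
    filter_upwards [cons] with ω hω hA
    rw [hω hA k hkK]
  rw [cuminc_eq_cprR Yzero Yabsorb hA hY posA.ne' hj,
    cprR_congr_ae P (B := {ω | Y k ω = j}) (B' := {ω | Z k ω = j}) hcons]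
  exact cprR_eq_prR_of_indep P
    (measure_inter_eq_mul_of_history hZ (hA (measurableSet_singleton a)) exch hkK j) posA.ne'

end Identification

theorem stmt14_general
    {Ω : Type*} [MeasurableSpace Ω] (P : Measure Ω) [IsProbabilityMeasure P] (K : ℕ)
    (A : Ω → Fin 2) (Y : ℕ → Ω → Fin 3)
    (Ya Ea : Fin 2 → ℕ → Ω → Fin 3)
    (hA : Measurable A) (hY : ∀ k, Measurable (Y k))
    (hYa : ∀ a k, Measurable (Ya a k))
    -- structural: value 0 at time 0, absorbing outcomes, absorbing exposure status
    (Yzero : ∀ ω, Y 0 ω = 0)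
    (Yabsorb : ∀ k ω, Y k ω ≠ 0 → Y (k + 1) ω = Y k ω)
    -- exchangeability: the potential outcome history (Y_1^a, …, Y_K^a) ⫫ A
    (exch : ∀ (a t : Fin 2) (ys : ℕ → Fin 3),
      P ({ω | ∀ k, k ≤ K → Ya a k ω = ys k} ∩ {ω | A ω = t})
        = P {ω | ∀ k, k ≤ K → Ya a k ω = ys k} * P {ω | A ω = t})
    -- positivity
    (posA : ∀ a : Fin 2, 0 < prR P {ω | A ω = a})
    -- consistency
    (cons : ∀ a : Fin 2, ∀ᵐ ω ∂P, A ω = a → ∀ k, k ≤ K → Ya a k ω = Y k ω)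
    -- exposure necessity
    (expnec : ∀ (a : Fin 2) (k : ℕ), k ≤ K → ∀ᵐ ω ∂P, Ea a k ω = 0 → Ya a k ω = 0)
    (k : ℕ) (hkK : k ≤ K)
    -- conditioning events have positive probability
    (posEne : ∀ a : Fin 2, 0 < prR P {ω | Ea a k ω ≠ 0}) :
    (cprR P {ω | Ya 1 k ω = 1} {ω | Ea 1 k ω ≠ 0}
        / cprR P {ω | Ya 0 k ω = 1} {ω | Ea 0 k ω ≠ 0})
      * (cprR P {ω | Ya 1 k ω = 2} {ω | Ea 1 k ω ≠ 0}
        / cprR P {ω | Ya 0 k ω = 2} {ω | Ea 0 k ω ≠ 0})⁻¹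
      = (cuminc P Y A 1 1 k / cuminc P Y A 1 0 k)
        * (cuminc P Y A 2 1 k / cuminc P Y A 2 0 k)⁻¹ := by
  have hident : ∀ (a : Fin 2) (j : Fin 3), j ≠ 0 →
      cuminc P Y A j a k = prR P {ω | Ya a k ω = j} := fun a _ hj =>
    cuminc_eq_prR_potential hA hY (hYa a) Yzero Yabsorb (exch a a) (posA a) (cons a) hkK hj
  have hexposed : ∀ (a : Fin 2) (j : Fin 3), j ≠ 0 →
      cprR P {ω | Ya a k ω = j} {ω | Ea a k ω ≠ 0}
        = prR P {ω | Ya a k ω = j} / prR P {ω | Ea a k ω ≠ 0} := fun a _ hj =>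
    cprR_eq_div_of_ae_imp P <| by
      filter_upwards [expnec a k hkK] with ω hω hYj hE
      exact hj (hYj.symm.trans (hω hE))
  have h1 : (1 : Fin 3) ≠ 0 := by decide
  have h2 : (2 : Fin 3) ≠ 0 := by decide
  rw [hexposed 1 1 h1, hexposed 0 1 h1, hexposed 1 2 h2, hexposed 0 2 h2,
    hident 1 1 h1, hident 0 1 h1, hident 1 2 h2, hident 0 2 h2]
  have he0 := (posEne 0).ne'
  have he1 := (posEne 1).ne'
  field_simp

/-- identification of the time-to-event contrast conditional on exposure
(`CCE_k`) from observed cumulative incidences, under exchangeability, positivity,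
consistency and exposure necessity. -/
theorem stmt14
    {Ω : Type*} [MeasurableSpace Ω] (P : Measure Ω) [IsProbabilityMeasure P] (K : ℕ)
    (A : Ω → Fin 2) (Y : ℕ → Ω → Fin 3)
    (Ya Ea : Fin 2 → ℕ → Ω → Fin 3)
    (hA : Measurable A) (hY : ∀ k, Measurable (Y k))
    (hYa : ∀ a k, Measurable (Ya a k)) (hEa : ∀ a k, Measurable (Ea a k))
    -- structural: value 0 at time 0, absorbing outcomes, absorbing exposure status
    (Yzero : ∀ ω, Y 0 ω = 0)
    (Yabsorb : ∀ k ω, Y k ω ≠ 0 → Y (k + 1) ω = Y k ω)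
    (Yazero : ∀ a ω, Ya a 0 ω = 0)
    (Yaabsorb : ∀ a k ω, Ya a k ω ≠ 0 → Ya a (k + 1) ω = Ya a k ω)
    (Eaabsorb : ∀ a k ω, Ea a k ω ≠ 0 → Ea a (k + 1) ω = Ea a k ω)
    -- exchangeability: the potential outcome history (Y_1^a, …, Y_K^a) ⫫ A
    (exch : ∀ (a t : Fin 2) (ys : ℕ → Fin 3),
      P ({ω | ∀ k, k ≤ K → Ya a k ω = ys k} ∩ {ω | A ω = t})
        = P {ω | ∀ k, k ≤ K → Ya a k ω = ys k} * P {ω | A ω = t})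
    -- positivity
    (posA : ∀ a : Fin 2, 0 < prR P {ω | A ω = a})
    (posRisk : ∀ (a : Fin 2) (k : ℕ), 1 ≤ k → k ≤ K →
      0 < cprR P {ω | Y (k - 1) ω = 0} {ω | A ω = a})
    -- consistency
    (cons : ∀ a : Fin 2, ∀ᵐ ω ∂P, A ω = a → ∀ k, k ≤ K → Ya a k ω = Y k ω)
    -- exposure necessity
    (expnec : ∀ (a : Fin 2) (k : ℕ), k ≤ K → ∀ᵐ ω ∂P, Ea a k ω = 0 → Ya a k ω = 0)
    (k : ℕ) (hk1 : 1 ≤ k) (hkK : k ≤ K)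
    -- conditioning events have positive probability
    (posEne : ∀ a : Fin 2, 0 < prR P {ω | Ea a k ω ≠ 0})
    -- all denominators are nonzero
    (d1 : cprR P {ω | Ya 0 k ω = 1} {ω | Ea 0 k ω ≠ 0} ≠ 0)
    (d2 : cprR P {ω | Ya 0 k ω = 2} {ω | Ea 0 k ω ≠ 0} ≠ 0)
    (d3 : cprR P {ω | Ya 1 k ω = 2} {ω | Ea 1 k ω ≠ 0} ≠ 0)
    (d4 : cuminc P Y A 1 0 k ≠ 0)
    (d5 : cuminc P Y A 2 0 k ≠ 0)
    (d6 : cuminc P Y A 2 1 k ≠ 0) :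
    (cprR P {ω | Ya 1 k ω = 1} {ω | Ea 1 k ω ≠ 0}
        / cprR P {ω | Ya 0 k ω = 1} {ω | Ea 0 k ω ≠ 0})
      * (cprR P {ω | Ya 1 k ω = 2} {ω | Ea 1 k ω ≠ 0}
        / cprR P {ω | Ya 0 k ω = 2} {ω | Ea 0 k ω ≠ 0})⁻¹
      = (cuminc P Y A 1 1 k / cuminc P Y A 1 0 k)
        * (cuminc P Y A 2 1 k / cuminc P Y A 2 0 k)⁻¹ :=
  stmt14_general P K A Y Ya Ea hA hY hYa Yzero Yabsorb exch posA cons expnec k hkK posEne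
end

section
/- Under the core RCT assumptions (exchangeability, positivity, consistency) together with no effect on exposure, exposure necessity and no cross-infectivity, writing E := E^1 = E^0, and assuming P(E = 1) > 0, P(E = 2) > 0, P(Y = 1 | A = 0) > P(Y = 1 | A = 1) and P(Y = 2 | A = 0) > P(Y = 2 | A = 1), the absolute CECE ratio aCECEr := [P(Y^1 = 1 | E = 1) − P(Y^0 = 1 | E = 1)] / [P(Y^1 = 2 | E = 2) − P(Y^0 = 2 | E = 2)] is well defined and satisfies the sharp partial-identification bounds RDr · P(Y = 2 | A = 0) ≤ aCECEr ≤ RDr / P(Y = 1 | A = 0), where RDr := [P(Y = 1 | A = 0) − P(Y = 1 | A = 1)] / [P(Y = 2 | A = 0) − P(Y = 2 | A = 1)]. -/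
open MeasureTheory

/-- sharp partial-identification bounds for the absolute CECE ratio:
under the core RCT assumptions, no effect on exposure, exposure necessity and
no cross-infectivity, with `P(Y=j|A=0) > P(Y=j|A=1)` for `j ∈ {1,2}`, the absolute
CECE ratio is well defined (nonzero denominator) and satisfies
`RDr · P(Y=2|A=0) ≤ aCECEr ≤ RDr / P(Y=1|A=0)`. -/
theorem stmt15
    {Ω : Type*} [MeasurableSpace Ω] (P : Measure Ω) [IsProbabilityMeasure P]
    (A : Ω → Fin 2) (E Y : Ω → Fin 3)
    (Ea Ya : Fin 2 → Ω → Fin 3)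
    (hA : Measurable A) (hE : Measurable E) (hY : Measurable Y)
    (hEa : ∀ a, Measurable (Ea a)) (hYa : ∀ a, Measurable (Ya a))
    -- exchangeability: (Y^a, E^a) ⫫ A
    (exch : ∀ (a : Fin 2) (y e : Fin 3) (t : Fin 2),
      P ({ω | Ya a ω = y} ∩ {ω | Ea a ω = e} ∩ {ω | A ω = t})
        = P ({ω | Ya a ω = y} ∩ {ω | Ea a ω = e}) * P {ω | A ω = t})
    -- positivity
    (pos : ∀ a : Fin 2, 0 < prR P {ω | A ω = a})
    -- consistency
    (cons : ∀ a : Fin 2, ∀ᵐ ω ∂P, A ω = a → Ea a ω = E ω ∧ Ya a ω = Y ω)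
    -- no effect on exposure
    (noexp : ∀ᵐ ω ∂P, Ea 1 ω = Ea 0 ω)
    -- exposure necessity
    (expnec : ∀ a : Fin 2, ∀ᵐ ω ∂P, Ea a ω = 0 → Ya a ω = 0)
    -- no cross-infectivity
    (nocross : ∀ a : Fin 2, ∀ᵐ ω ∂P, (Ea a ω = 1 → Ya a ω ≠ 2) ∧ (Ea a ω = 2 → Ya a ω ≠ 1))
    -- positivity of exposure to each variant (factual exposure E)
    (posE : ∀ j : Fin 3, j = 1 ∨ j = 2 → 0 < prR P {ω | E ω = j})
    -- strict protective-effect inequalities on the observed data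
    (hObs1 : cprR P {ω | Y ω = 1} {ω | A ω = 1} < cprR P {ω | Y ω = 1} {ω | A ω = 0})
    (hObs2 : cprR P {ω | Y ω = 2} {ω | A ω = 1} < cprR P {ω | Y ω = 2} {ω | A ω = 0}) :
    cprR P {ω | Ya 1 ω = 2} {ω | E ω = 2} - cprR P {ω | Ya 0 ω = 2} {ω | E ω = 2} ≠ 0
    ∧ ((cprR P {ω | Y ω = 1} {ω | A ω = 0} - cprR P {ω | Y ω = 1} {ω | A ω = 1})
          / (cprR P {ω | Y ω = 2} {ω | A ω = 0} - cprR P {ω | Y ω = 2} {ω | A ω = 1}))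
        * cprR P {ω | Y ω = 2} {ω | A ω = 0}
      ≤ (cprR P {ω | Ya 1 ω = 1} {ω | E ω = 1} - cprR P {ω | Ya 0 ω = 1} {ω | E ω = 1})
        / (cprR P {ω | Ya 1 ω = 2} {ω | E ω = 2} - cprR P {ω | Ya 0 ω = 2} {ω | E ω = 2})
    ∧ (cprR P {ω | Ya 1 ω = 1} {ω | E ω = 1} - cprR P {ω | Ya 0 ω = 1} {ω | E ω = 1})
        / (cprR P {ω | Ya 1 ω = 2} {ω | E ω = 2} - cprR P {ω | Ya 0 ω = 2} {ω | E ω = 2})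
      ≤ ((cprR P {ω | Y ω = 1} {ω | A ω = 0} - cprR P {ω | Y ω = 1} {ω | A ω = 1})
          / (cprR P {ω | Y ω = 2} {ω | A ω = 0} - cprR P {ω | Y ω = 2} {ω | A ω = 1}))
        / cprR P {ω | Y ω = 1} {ω | A ω = 0} := by

  classical
  -- basic case facts
  have tri : ∀ x : Fin 3, x = 0 ∨ x = 1 ∨ x = 2 := by decide
  have two : ∀ x : Fin 2, x = 0 ∨ x = 1 := by decide
  -- step 1: a.e., Ya a = j implies Ea a = j, for j = 1, 2
  have h1 : ∀ a : Fin 2, ∀ᵐ ω ∂P, ∀ j : Fin 3, (j = 1 ∨ j = 2) → Ya a ω = j → Ea a ω = j := by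
    intro a
    filter_upwards [expnec a, nocross a] with ω hen hnc j hj hy
    rcases tri (Ea a ω) with h | h | h
    · exfalso
      have := hen h
      rcases hj with rfl | rfl <;> simp [this] at hy
    · rcases hj with rfl | rfl
      · exact h
      · exact absurd hy (hnc.1 h)
    · rcases hj with rfl | rfl
      · exact absurd hy (hnc.2 h)
      · exact h
  -- step 2: a.e., E = Ea 0 = Ea 1
  have h2 : ∀ᵐ ω ∂P, E ω = Ea 0 ω ∧ E ω = Ea 1 ω := by
    filter_upwards [cons 0, cons 1, noexp] with ω h0 h1' hne
    rcases two (A ω) with h | h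
    · have := (h0 h).1
      exact ⟨this.symm, by rw [hne]; exact this.symm⟩
    · have := (h1' h).1
      exact ⟨by rw [← hne]; exact this.symm, this.symm⟩
  -- key observed-data identity
  have keyY : ∀ (a : Fin 2) (j : Fin 3), (j = 1 ∨ j = 2) →
      P ({ω | Y ω = j} ∩ {ω | A ω = a}) = P {ω | Ya a ω = j} * P {ω | A ω = a} := by
    intro a j hj
    have e1 : ({ω | Y ω = j} ∩ {ω | A ω = a} : Set Ω)
        =ᵐ[P] (({ω | Ya a ω = j} ∩ {ω | Ea a ω = j} ∩ {ω | A ω = a} : Set Ω)) := by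
      rw [Filter.eventuallyEq_set]
      filter_upwards [cons a, h1 a] with ω hc hh
      simp only [Set.mem_inter_iff, Set.mem_setOf_eq]
      constructor
      · rintro ⟨hy, ha⟩
        have hya : Ya a ω = j := by rw [(hc ha).2]; exact hy
        exact ⟨⟨hya, hh j hj hya⟩, ha⟩
      · rintro ⟨⟨hy, _⟩, ha⟩
        refine ⟨?_, ha⟩
        rw [← (hc ha).2]; exact hy
    have e2 : ({ω | Ya a ω = j} ∩ {ω | Ea a ω = j} : Set Ω) =ᵐ[P] {ω | Ya a ω = j} := by
      rw [Filter.eventuallyEq_set]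
      filter_upwards [h1 a] with ω hh
      simp only [Set.mem_inter_iff, Set.mem_setOf_eq]
      exact ⟨fun h => h.1, fun h => ⟨h, hh j hj h⟩⟩
    rw [measure_congr e1, exch a j j a, measure_congr e2]
  -- key counterfactual identity
  have keyE : ∀ (a : Fin 2) (j : Fin 3), (j = 1 ∨ j = 2) →
      P ({ω | Ya a ω = j} ∩ {ω | E ω = j}) = P {ω | Ya a ω = j} := by
    intro a j hj
    refine measure_congr ?_
    rw [Filter.eventuallyEq_set]
    filter_upwards [h1 a, h2] with ω hh he
    simp only [Set.mem_inter_iff, Set.mem_setOf_eq]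
    refine ⟨fun h => h.1, fun h => ⟨h, ?_⟩⟩
    have : Ea a ω = j := hh j hj h
    rcases two a with rfl | rfl
    · rw [he.1]; exact this
    · rw [he.2]; exact this
  -- observed conditional probabilities identify counterfactual marginals
  have cobs : ∀ (a : Fin 2) (j : Fin 3), (j = 1 ∨ j = 2) →
      cprR P {ω | Y ω = j} {ω | A ω = a} = (P {ω | Ya a ω = j}).toReal := by
    intro a j hj
    have hpa : (P {ω | A ω = a}).toReal ≠ 0 := ne_of_gt (pos a)
    unfold cprR
    rw [keyY a j hj, ENNReal.toReal_mul, mul_div_assoc, div_self hpa, mul_one]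
  have ccf : ∀ (a : Fin 2) (j : Fin 3), (hj : j = 1 ∨ j = 2) →
      cprR P {ω | Ya a ω = j} {ω | E ω = j}
        = (P {ω | Ya a ω = j}).toReal / (P {ω | E ω = j}).toReal := by
    intro a j hj
    unfold cprR
    rw [keyE a j hj]
  -- rewrite everything into counterfactual marginals
  rw [cobs 1 1 (Or.inl rfl), cobs 0 1 (Or.inl rfl)] at hObs1
  rw [cobs 1 2 (Or.inr rfl), cobs 0 2 (Or.inr rfl)] at hObs2
  rw [cobs 1 1 (Or.inl rfl), cobs 0 1 (Or.inl rfl), cobs 1 2 (Or.inr rfl),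
    cobs 0 2 (Or.inr rfl), ccf 1 1 (Or.inl rfl), ccf 0 1 (Or.inl rfl),
    ccf 1 2 (Or.inr rfl), ccf 0 2 (Or.inr rfl)]
  -- real-number abbreviations
  have hq01e : (P {ω | Ya 0 ω = 1}).toReal ≤ (P {ω | E ω = 1}).toReal := by
    refine ENNReal.toReal_mono (measure_ne_top P _) ?_
    rw [← keyE 0 1 (Or.inl rfl)]
    exact measure_mono Set.inter_subset_right
  have hq02e : (P {ω | Ya 0 ω = 2}).toReal ≤ (P {ω | E ω = 2}).toReal := by
    refine ENNReal.toReal_mono (measure_ne_top P _) ?_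
    rw [← keyE 0 2 (Or.inr rfl)]
    exact measure_mono Set.inter_subset_right
  have he1pos : (0:ℝ) < (P {ω | E ω = 1}).toReal := posE 1 (Or.inl rfl)
  have he2pos : (0:ℝ) < (P {ω | E ω = 2}).toReal := posE 2 (Or.inr rfl)
  have he1le : (P {ω | E ω = 1}).toReal ≤ 1 := by
    rw [← ENNReal.toReal_one]
    exact ENNReal.toReal_mono ENNReal.one_ne_top prob_le_one
  have he2le : (P {ω | E ω = 2}).toReal ≤ 1 := by
    rw [← ENNReal.toReal_one]
    exact ENNReal.toReal_mono ENNReal.one_ne_top prob_le_one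
  set q01 : ℝ := (P {ω | Ya 0 ω = 1}).toReal
  set q11 : ℝ := (P {ω | Ya 1 ω = 1}).toReal
  set q02 : ℝ := (P {ω | Ya 0 ω = 2}).toReal
  set q12 : ℝ := (P {ω | Ya 1 ω = 2}).toReal
  set e1 : ℝ := (P {ω | E ω = 1}).toReal
  set e2 : ℝ := (P {ω | E ω = 2}).toReal
  have hq11nn : 0 ≤ q11 := ENNReal.toReal_nonneg
  have hq12nn : 0 ≤ q12 := ENNReal.toReal_nonneg
  have hr1 : 0 < q01 - q11 := by linarith
  have hr2 : 0 < q02 - q12 := by linarith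
  have hq01pos : 0 < q01 := lt_of_le_of_lt hq11nn hObs1
  have hq02pos : 0 < q02 := lt_of_le_of_lt hq12nn hObs2
  have hden : q12 / e2 - q02 / e2 ≠ 0 := by
    have : q12 / e2 < q02 / e2 := div_lt_div_of_pos_right hObs2 he2pos
    linarith
  have key : (q11 / e1 - q01 / e1) / (q12 / e2 - q02 / e2)
      = ((q01 - q11) * e2) / ((q02 - q12) * e1) := by
    rw [div_eq_div_iff hden (by positivity)]
    field_simp
    ring
  have haux1 : q02 * e1 ≤ e2 := by nlinarith
  have haux2 : e2 * q01 ≤ e1 := by nlinarith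
  refine ⟨hden, ?_, ?_⟩
  · rw [key, div_mul_eq_mul_div, div_le_div_iff₀ hr2 (by positivity)]
    nlinarith [mul_le_mul_of_nonneg_left haux1 hr1.le]
  · rw [key, div_div, div_le_div_iff₀ (by positivity) (by positivity)]
    nlinarith [mul_le_mul_of_nonneg_left haux2 hr1.le]
end

section
/- Under the factual exposure necessity and factual no cross-infectivity assumptions, for every l ∈ 𝓛 such that P(A = 0, E = j, L = l) > 0 for j ∈ {1,2} and the denominators below are nonzero, the exposure ratio of the untreated is identified: [P(Y = 1 | A = 0, L = l) / P(Y = 2 | A = 0, L = l)] · [P(Y = 1 | E = 1, A = 0, L = l) / P(Y = 2 | E = 2, A = 0, L = l)]^{-1} = P(E = 1 | A = 0, L = l) / P(E = 2 | A = 0, L = l). -/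
open MeasureTheory

/-- under factual exposure necessity and factual no cross-infectivity,
the exposure ratio of the untreated is identified:
`[P(Y=1|A=0,L=l)/P(Y=2|A=0,L=l)] · [P(Y=1|E=1,A=0,L=l)/P(Y=2|E=2,A=0,L=l)]⁻¹
  = P(E=1|A=0,L=l)/P(E=2|A=0,L=l)`. -/
theorem stmt17
    {Ω 𝓛 : Type*} [MeasurableSpace Ω] [MeasurableSpace 𝓛] [Fintype 𝓛]
    (P : Measure Ω) [IsProbabilityMeasure P]
    (A : Ω → Fin 2) (E Y : Ω → Fin 3) (L : Ω → 𝓛)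
    (hA : Measurable A) (hE : Measurable E) (hY : Measurable Y) (hL : Measurable L)
    -- factual exposure necessity
    (fnec : ∀ᵐ ω ∂P, E ω = 0 → Y ω = 0)
    -- factual no cross-infectivity
    (fnocross : ∀ᵐ ω ∂P, (E ω = 1 → Y ω ≠ 2) ∧ (E ω = 2 → Y ω ≠ 1))
    (l : 𝓛)
    -- positivity of the conditioning events
    (posAEL : ∀ j : Fin 3, j = 1 ∨ j = 2 →
      0 < prR P ({ω | A ω = 0} ∩ {ω | E ω = j} ∩ {ω | L ω = l}))
    -- all denominators are nonzero
    (d1 : cprR P {ω | Y ω = 2} ({ω | A ω = 0} ∩ {ω | L ω = l}) ≠ 0)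
    (d2 : cprR P {ω | Y ω = 1} ({ω | E ω = 1} ∩ {ω | A ω = 0} ∩ {ω | L ω = l}) ≠ 0)
    (d3 : cprR P {ω | Y ω = 2} ({ω | E ω = 2} ∩ {ω | A ω = 0} ∩ {ω | L ω = l}) ≠ 0)
    (d4 : cprR P {ω | E ω = 2} ({ω | A ω = 0} ∩ {ω | L ω = l}) ≠ 0) :
    (cprR P {ω | Y ω = 1} ({ω | A ω = 0} ∩ {ω | L ω = l})
        / cprR P {ω | Y ω = 2} ({ω | A ω = 0} ∩ {ω | L ω = l}))
      * (cprR P {ω | Y ω = 1} ({ω | E ω = 1} ∩ {ω | A ω = 0} ∩ {ω | L ω = l})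
        / cprR P {ω | Y ω = 2} ({ω | E ω = 2} ∩ {ω | A ω = 0} ∩ {ω | L ω = l}))⁻¹
      = cprR P {ω | E ω = 1} ({ω | A ω = 0} ∩ {ω | L ω = l})
        / cprR P {ω | E ω = 2} ({ω | A ω = 0} ∩ {ω | L ω = l}) := by
  classical
  have fin1 : ∀ x : Fin 3, x ≠ 0 → x ≠ 2 → x = 1 := by decide
  have fin2 : ∀ x : Fin 3, x ≠ 0 → x ≠ 1 → x = 2 := by decide
  have key : ∀ᵐ ω ∂P, (Y ω = 1 → E ω = 1) ∧ (Y ω = 2 → E ω = 2) := by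
    filter_upwards [fnec, fnocross] with ω h0 hc
    constructor
    · intro hy
      refine fin1 _ (fun h => ?_) (fun h => (hc.2 h) hy)
      rw [h0 h] at hy; exact absurd hy (by decide)
    · intro hy
      refine fin2 _ (fun h => ?_) (fun h => (hc.1 h) hy)
      rw [h0 h] at hy; exact absurd hy (by decide)
  set C : Set Ω := {ω | A ω = 0} ∩ {ω | L ω = l} with hC
  -- measure equalities
  have meq1 : P ({ω | Y ω = 1} ∩ C) = P ({ω | Y ω = 1} ∩ ({ω | E ω = 1} ∩ C)) := by
    apply measure_congr
    filter_upwards [key] with ω hk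
    apply eq_iff_iff.mpr
    constructor
    · rintro ⟨hy, hc⟩; exact ⟨hy, hk.1 hy, hc⟩
    · rintro ⟨hy, _, hc⟩; exact ⟨hy, hc⟩
  have meq2 : P ({ω | Y ω = 2} ∩ C) = P ({ω | Y ω = 2} ∩ ({ω | E ω = 2} ∩ C)) := by
    apply measure_congr
    filter_upwards [key] with ω hk
    apply eq_iff_iff.mpr
    constructor
    · rintro ⟨hy, hc⟩; exact ⟨hy, hk.2 hy, hc⟩
    · rintro ⟨hy, _, hc⟩; exact ⟨hy, hc⟩
  have hassoc1 : {ω | E ω = (1:Fin 3)} ∩ {ω | A ω = 0} ∩ {ω | L ω = l}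
      = {ω | E ω = (1:Fin 3)} ∩ C := by rw [hC, Set.inter_assoc]
  have hassoc2 : {ω | E ω = (2:Fin 3)} ∩ {ω | A ω = 0} ∩ {ω | L ω = l}
      = {ω | E ω = (2:Fin 3)} ∩ C := by rw [hC, Set.inter_assoc]
  set a : ℝ := (P ({ω | Y ω = 1} ∩ ({ω | E ω = 1} ∩ C))).toReal with ha
  set b : ℝ := (P ({ω | Y ω = 2} ∩ ({ω | E ω = 2} ∩ C))).toReal with hb
  set p1 : ℝ := (P ({ω | E ω = (1:Fin 3)} ∩ C)).toReal with hp1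
  set p2 : ℝ := (P ({ω | E ω = (2:Fin 3)} ∩ C)).toReal with hp2
  set c : ℝ := (P C).toReal with hc0
  have e1 : cprR P {ω | Y ω = 1} C = a / c := by rw [cprR, meq1]
  have e2 : cprR P {ω | Y ω = 2} C = b / c := by rw [cprR, meq2]
  have e3 : cprR P {ω | Y ω = 1} ({ω | E ω = 1} ∩ {ω | A ω = 0} ∩ {ω | L ω = l})
      = a / p1 := by rw [cprR, hassoc1]
  have e4 : cprR P {ω | Y ω = 2} ({ω | E ω = 2} ∩ {ω | A ω = 0} ∩ {ω | L ω = l})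
      = b / p2 := by rw [cprR, hassoc2]
  have e5 : cprR P {ω | E ω = 1} C = p1 / c := by rw [cprR]
  have e6 : cprR P {ω | E ω = 2} C = p2 / c := by rw [cprR]
  rw [e2] at d1; rw [e3] at d2; rw [e4] at d3
  have hb0 : b ≠ 0 := fun h => d1 (by rw [h]; simp)
  have hc1 : c ≠ 0 := fun h => d1 (by rw [h]; simp)
  have ha0 : a ≠ 0 := fun h => d2 (by rw [h]; simp)
  have hp10 : p1 ≠ 0 := fun h => d2 (by rw [h]; simp)
  have hp20 : p2 ≠ 0 := fun h => d3 (by rw [h]; simp)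
  rw [e1, e2, e3, e4, e5, e6]
  field_simp
end

section
/- At the counterfactual level (no exchangeability with A required): (i) under exposure necessity, and provided P(E^a ≠ 0) > 0 for a ∈ {0,1} and all denominators below are nonzero, the average treatment effect ratio ATEr := [P(Y^1 = 1)/P(Y^0 = 1)] / [P(Y^1 = 2)/P(Y^0 = 2)] equals the contrast conditional on exposure CCE := [P(Y^1 = 1 | E^1 ≠ 0)/P(Y^0 = 1 | E^0 ≠ 0)] / [P(Y^1 = 2 | E^1 ≠ 0)/P(Y^0 = 2 | E^0 ≠ 0)]; (ii) if additionally no cross-infectivity and no effect on exposure hold and P(E^a = j) > 0 for j ∈ {1,2}, then CCE equals the contrast conditional on subtype-specific exposure CCS := [P(Y^1 = 1 | E^1 = 1)/P(Y^0 = 1 | E^0 = 1)] / [P(Y^1 = 2 | E^1 = 2)/P(Y^0 = 2 | E^0 = 2)]; hence ATEr = CCE = CCS. -/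
open MeasureTheory

private lemma inter_ae_eq {Ω : Type*} [MeasurableSpace Ω] (P : MeasureTheory.Measure Ω)
    {B C : Set Ω} (h : ∀ᵐ ω ∂P, ω ∈ B → ω ∈ C) : P (B ∩ C) = P B := by
  apply MeasureTheory.measure_congr
  filter_upwards [h] with ω hω
  exact eq_iff_iff.mpr ⟨And.left, fun hb => ⟨hb, hω hb⟩⟩



/-- at the counterfactual level, (i) under exposure necessity the average
treatment effect ratio (ATEr) equals the contrast conditional on exposure (CCE); (ii) if
additionally no cross-infectivity and no effect on exposure hold and `P(E^a = j) > 0`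
for `j ∈ {1,2}`, then the CCE equals the contrast conditional on subtype-specific
exposure (CCS); hence `ATEr = CCE = CCS`. -/
theorem stmt19
    {Ω : Type*} [MeasurableSpace Ω] (P : Measure Ω) [IsProbabilityMeasure P]
    (Ea Ya : Fin 2 → Ω → Fin 3)
    (hEa : ∀ a, Measurable (Ea a)) (hYa : ∀ a, Measurable (Ya a))
    -- exposure necessity
    (expnec : ∀ a : Fin 2, ∀ᵐ ω ∂P, Ea a ω = 0 → Ya a ω = 0)
    -- positivity of exposure
    (posEne : ∀ a : Fin 2, 0 < prR P {ω | Ea a ω ≠ 0})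
    -- all denominators below are nonzero
    (d1 : prR P {ω | Ya 0 ω = 1} ≠ 0)
    (d2 : prR P {ω | Ya 0 ω = 2} ≠ 0)
    (d3 : prR P {ω | Ya 1 ω = 2} ≠ 0)
    (d4 : cprR P {ω | Ya 0 ω = 1} {ω | Ea 0 ω ≠ 0} ≠ 0)
    (d5 : cprR P {ω | Ya 0 ω = 2} {ω | Ea 0 ω ≠ 0} ≠ 0)
    (d6 : cprR P {ω | Ya 1 ω = 2} {ω | Ea 1 ω ≠ 0} ≠ 0) :
    -- (i) ATEr = CCE
    (prR P {ω | Ya 1 ω = 1} / prR P {ω | Ya 0 ω = 1})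
        / (prR P {ω | Ya 1 ω = 2} / prR P {ω | Ya 0 ω = 2})
      = (cprR P {ω | Ya 1 ω = 1} {ω | Ea 1 ω ≠ 0} / cprR P {ω | Ya 0 ω = 1} {ω | Ea 0 ω ≠ 0})
        / (cprR P {ω | Ya 1 ω = 2} {ω | Ea 1 ω ≠ 0}
          / cprR P {ω | Ya 0 ω = 2} {ω | Ea 0 ω ≠ 0})
    -- (ii) with the additional assumptions, CCE = CCS
    ∧ ((∀ a : Fin 2, ∀ᵐ ω ∂P, (Ea a ω = 1 → Ya a ω ≠ 2) ∧ (Ea a ω = 2 → Ya a ω ≠ 1)) →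
       (∀ᵐ ω ∂P, Ea 1 ω = Ea 0 ω) →
       (∀ (a : Fin 2) (j : Fin 3), j = 1 ∨ j = 2 → 0 < prR P {ω | Ea a ω = j}) →
       cprR P {ω | Ya 0 ω = 1} {ω | Ea 0 ω = 1} ≠ 0 →
       cprR P {ω | Ya 0 ω = 2} {ω | Ea 0 ω = 2} ≠ 0 →
       cprR P {ω | Ya 1 ω = 2} {ω | Ea 1 ω = 2} ≠ 0 →
       (cprR P {ω | Ya 1 ω = 1} {ω | Ea 1 ω ≠ 0} / cprR P {ω | Ya 0 ω = 1} {ω | Ea 0 ω ≠ 0})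
           / (cprR P {ω | Ya 1 ω = 2} {ω | Ea 1 ω ≠ 0}
             / cprR P {ω | Ya 0 ω = 2} {ω | Ea 0 ω ≠ 0})
         = (cprR P {ω | Ya 1 ω = 1} {ω | Ea 1 ω = 1}
             / cprR P {ω | Ya 0 ω = 1} {ω | Ea 0 ω = 1})
           / (cprR P {ω | Ya 1 ω = 2} {ω | Ea 1 ω = 2}
             / cprR P {ω | Ya 0 ω = 2} {ω | Ea 0 ω = 2})) := by
  have hqne : ∀ a : Fin 2, (P {ω | Ea a ω ≠ 0}).toReal ≠ 0 := fun a => ne_of_gt (posEne a)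
  have key1 : ∀ (a : Fin 2) (j : Fin 3), j ≠ 0 →
      P ({ω | Ya a ω = j} ∩ {ω | Ea a ω ≠ 0}) = P {ω | Ya a ω = j} := by
    intro a j hj
    apply inter_ae_eq
    filter_upwards [expnec a] with ω hω hY
    intro hE
    exact hj (hY.symm.trans (hω hE))
  constructor
  · simp only [prR, cprR]
    rw [key1 0 1 (by decide), key1 0 2 (by decide), key1 1 1 (by decide), key1 1 2 (by decide)]
    simp only [prR, cprR, key1 0 1 (by decide), key1 0 2 (by decide)] at d1 d2 d3 d4 d5 d6 ⊢
    have hq0 := hqne 0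
    have hq1 := hqne 1
    field_simp
  · intro hnc hne hpos e4 e5 e6
    have key2 : ∀ (a : Fin 2) (j : Fin 3), j = 1 ∨ j = 2 →
        P ({ω | Ya a ω = j} ∩ {ω | Ea a ω = j}) = P {ω | Ya a ω = j} := by
      intro a j hj
      apply inter_ae_eq
      filter_upwards [expnec a, hnc a] with ω hω hω2 hY
      have htri : ∀ x : Fin 3, x = 0 ∨ x = 1 ∨ x = 2 := by decide
      rcases hj with rfl | rfl <;>
        rcases htri (Ea a ω) with h | h | h <;> simp_all
    have hEq : ∀ j : Fin 3, P {ω | Ea 1 ω = j} = P {ω | Ea 0 ω = j} := by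
      intro j
      apply MeasureTheory.measure_congr
      filter_upwards [hne] with ω hω
      exact congrArg (fun x => x = j) hω
    have hEqne : P {ω | Ea 1 ω ≠ 0} = P {ω | Ea 0 ω ≠ 0} := by
      apply MeasureTheory.measure_congr
      filter_upwards [hne] with ω hω
      exact congrArg (fun x => ¬ x = 0) hω
    have hp1 : (P {ω | Ea 0 ω = 1}).toReal ≠ 0 := ne_of_gt (hpos 0 1 (Or.inl rfl))
    have hp2 : (P {ω | Ea 0 ω = 2}).toReal ≠ 0 := ne_of_gt (hpos 0 2 (Or.inr rfl))
    simp only [cprR, key1 0 1 (by decide), key1 0 2 (by decide), key1 1 1 (by decide),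
      key1 1 2 (by decide), key2 0 1 (Or.inl rfl), key2 0 2 (Or.inr rfl),
      key2 1 1 (Or.inl rfl), key2 1 2 (Or.inr rfl), hEqne, hEq] at e4 e5 e6 ⊢
    have hq := hqne 0
    field_simp
end
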